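/- arXiv:2503.17927 — 11 statements merged into one kernel-verified Lean document; each statement's English description precedes it below -/
import Mathlib

section
/- Let r be a real random variable with P(r ≥ -1) = 1, P(r > 0) > 0, P(r < 0) > 0, and E[(ln(1+r))²] < ∞. Then the function g_r(f) = E[ln(1 + f r)] is strictly concave on the interval (0,1). -/
open MeasureTheory ProbabilityTheory Real Filter Topology

private lemma abs_log_bound {c r : ℝ} (hc0 : 0 < c) (hc1 : c < 1) (hr : -1 ≤ r) :
    |Real.log (1 + c * r)| ≤ |Real.log (1 + r)| + |Real.log (1 - c)| := by
  rcases le_or_gt 0 r with h0 | h0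
  · -- r ≥ 0 : 1 ≤ 1 + c r ≤ 1 + r
    have h1 : (1 : ℝ) ≤ 1 + c * r := by nlinarith
    have h2 : 1 + c * r ≤ 1 + r := by nlinarith
    have hl1 : 0 ≤ Real.log (1 + c * r) := Real.log_nonneg h1
    have hl2 : Real.log (1 + c * r) ≤ Real.log (1 + r) :=
      Real.log_le_log (by linarith) h2
    have : |Real.log (1 + c * r)| ≤ Real.log (1 + r) := by
      rw [abs_of_nonneg hl1]; exact hl2
    calc |Real.log (1 + c * r)| ≤ Real.log (1 + r) := this
      _ ≤ |Real.log (1 + r)| := le_abs_self _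
      _ ≤ |Real.log (1 + r)| + |Real.log (1 - c)| :=
        le_add_of_nonneg_right (abs_nonneg _)
  · rcases eq_or_lt_of_le hr with h | h
    · -- r = -1
      have : r = -1 := h.symm
      subst this
      rw [show (1 : ℝ) + -1 = 0 by ring, Real.log_zero, abs_zero, zero_add,
        show 1 + c * (-1) = 1 - c by ring]
    · -- -1 < r < 0 : 0 < 1 + r ≤ 1 + c r ≤ 1
      have h1 : 0 < 1 + r := by linarith
      have h2 : 1 + r ≤ 1 + c * r := by nlinarith
      have h3 : 1 + c * r ≤ 1 := by nlinarith
      have hl1 : Real.log (1 + c * r) ≤ 0 := Real.log_nonpos (by linarith) h3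
      have hl2 : Real.log (1 + r) ≤ Real.log (1 + c * r) := Real.log_le_log h1 h2
      have : |Real.log (1 + c * r)| ≤ |Real.log (1 + r)| := by
        rw [abs_of_nonpos hl1, abs_of_nonpos (hl2.trans hl1)]
        linarith
      calc |Real.log (1 + c * r)| ≤ |Real.log (1 + r)| := this
        _ ≤ |Real.log (1 + r)| + |Real.log (1 - c)| :=
          le_add_of_nonneg_right (abs_nonneg _)

private lemma combo_le {x y a b r : ℝ} (hx0 : 0 < x) (hx1 : x < 1)
    (hy0 : 0 < y) (hy1 : y < 1) (ha : 0 < a) (hb : 0 < b) (hab : a + b = 1)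
    (hr : -1 ≤ r) :
    a * Real.log (1 + x * r) + b * Real.log (1 + y * r)
      ≤ Real.log (1 + (a * x + b * y) * r) := by
  have hpx : 0 < 1 + x * r := by nlinarith
  have hpy : 0 < 1 + y * r := by nlinarith
  have := (strictConcaveOn_log_Ioi.concaveOn).2 (Set.mem_Ioi.2 hpx)
    (Set.mem_Ioi.2 hpy) ha.le hb.le hab
  simp only [smul_eq_mul] at this
  have heq : a * (1 + x * r) + b * (1 + y * r) = 1 + (a * x + b * y) * r := by
    nlinarith [hab]
  rw [heq] at this
  linarith

private lemma combo_lt {x y a b r : ℝ} (hx0 : 0 < x) (hx1 : x < 1)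
    (hy0 : 0 < y) (hy1 : y < 1) (ha : 0 < a) (hb : 0 < b) (hab : a + b = 1)
    (hxy : x ≠ y) (hr : -1 ≤ r) (hrne : r ≠ 0) :
    a * Real.log (1 + x * r) + b * Real.log (1 + y * r)
      < Real.log (1 + (a * x + b * y) * r) := by
  have hpx : 0 < 1 + x * r := by nlinarith
  have hpy : 0 < 1 + y * r := by nlinarith
  have hne : (1 : ℝ) + x * r ≠ 1 + y * r := by
    intro h
    apply hxy
    have : (x - y) * r = 0 := by linarith
    rcases mul_eq_zero.1 this with h' | h'
    · linarith
    · exact absurd h' hrne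
  have := strictConcaveOn_log_Ioi.2 (Set.mem_Ioi.2 hpx)
    (Set.mem_Ioi.2 hpy) hne ha hb hab
  simp only [smul_eq_mul] at this
  have heq : a * (1 + x * r) + b * (1 + y * r) = 1 + (a * x + b * y) * r := by
    nlinarith [hab]
  rw [heq] at this
  linarith

/-- Under the standing assumptions on the return `r`
(`r ≥ -1` a.s., both gains and losses possible, square-integrable log-return),
the asymptotic growth rate `g_r(f) = E[log(1 + f r)]` is strictly concave on `(0,1)`. -/
theorem growth_rate_strictConcaveOn
    {Ω : Type*} [MeasurableSpace Ω] (P : Measure Ω) [IsProbabilityMeasure P]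
    (r : Ω → ℝ) (hmeas : Measurable r)
    (h1 : ∀ᵐ ω ∂P, -1 ≤ r ω)
    (hpos : 0 < P {ω | 0 < r ω})
    (hneg : 0 < P {ω | r ω < 0})
    (hsq : Integrable (fun ω => (Real.log (1 + r ω)) ^ 2) P) :
    StrictConcaveOn ℝ (Set.Ioo (0 : ℝ) 1)
      (fun f => ∫ ω, Real.log (1 + f * r ω) ∂P) := by
  -- integrability of log(1+r)
  have hlog : Integrable (fun ω => Real.log (1 + r ω)) P := by
    refine (hsq.add (integrable_const 1)).mono'
      ((hmeas.const_add 1).log.aestronglyMeasurable) ?_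
    filter_upwards with ω
    have : |Real.log (1 + r ω)| ≤ (Real.log (1 + r ω)) ^ 2 + 1 := by
      nlinarith [sq_nonneg (|Real.log (1 + r ω)| - 1), sq_abs (Real.log (1 + r ω))]
    simpa [Real.norm_eq_abs, abs_of_nonneg (by positivity :
      (0:ℝ) ≤ (Real.log (1 + r ω)) ^ 2 + 1)] using this
  -- integrability of log(1 + c r) for c ∈ (0,1)
  have hint : ∀ c : ℝ, 0 < c → c < 1 →
      Integrable (fun ω => Real.log (1 + c * r ω)) P := by
    intro c hc0 hc1
    refine (hlog.abs.add (integrable_const |Real.log (1 - c)|)).mono'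
      ((hmeas.const_mul c |>.const_add 1).log.aestronglyMeasurable) ?_
    filter_upwards [h1] with ω hω
    simpa [Real.norm_eq_abs] using abs_log_bound hc0 hc1 hω
  constructor
  · exact convex_Ioo 0 1
  intro x hx y hy hxy a b ha hb hab
  obtain ⟨hx0, hx1⟩ := hx
  obtain ⟨hy0, hy1⟩ := hy
  set z := a * x + b * y with hz
  have hz0 : 0 < z := by positivity
  have hz1 : z < 1 := by nlinarith
  have Ix := hint x hx0 hx1
  have Iy := hint y hy0 hy1
  have Iz := hint z hz0 hz1
  set h : Ω → ℝ := fun ω => Real.log (1 + z * r ω)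
      - (a * Real.log (1 + x * r ω) + b * Real.log (1 + y * r ω)) with hhdef
  have Ixy : Integrable (fun ω => a * Real.log (1 + x * r ω)
      + b * Real.log (1 + y * r ω)) P := (Ix.const_mul a).add (Iy.const_mul b)
  have Ih : Integrable h P := Iz.sub Ixy
  have hnn : 0 ≤ᵐ[P] h := by
    filter_upwards [h1] with ω hω
    have := combo_le hx0 hx1 hy0 hy1 ha hb hab hω
    simp only [hhdef, Pi.zero_apply]
    linarith
  have hsupp : 0 < P (Function.support h) := by
    have hsub : {ω | 0 < r ω} ∩ {ω | -1 ≤ r ω} ⊆ Function.support h := by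
      intro ω ⟨hω1, hω2⟩
      have := combo_lt hx0 hx1 hy0 hy1 ha hb hab hxy hω2 (ne_of_gt hω1)
      simp only [Function.mem_support, hhdef]
      intro hc
      linarith
    have hnull : P {ω | -1 ≤ r ω}ᶜ = 0 := by
      have := h1
      rw [ae_iff] at this
      simpa [Set.compl_setOf] using this
    have : P {ω | 0 < r ω} ≤ P ({ω | 0 < r ω} ∩ {ω | -1 ≤ r ω})
        + P ({ω | 0 < r ω} \ {ω | -1 ≤ r ω}) := measure_le_inter_add_diff _ _ _
    have hd0 : P ({ω | 0 < r ω} \ {ω | -1 ≤ r ω}) = 0 :=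
      measure_mono_null (Set.diff_subset_compl _ _) hnull
    rw [hd0, add_zero] at this
    exact lt_of_lt_of_le (lt_of_lt_of_le hpos this) (measure_mono hsub)
  have hIpos : 0 < ∫ ω, h ω ∂P :=
    (integral_pos_iff_support_of_nonneg_ae hnn Ih).2 hsupp
  have hsplit : ∫ ω, h ω ∂P = (∫ ω, Real.log (1 + z * r ω) ∂P)
      - (a * ∫ ω, Real.log (1 + x * r ω) ∂P + b * ∫ ω, Real.log (1 + y * r ω) ∂P) := by
    simp only [hhdef]
    rw [integral_sub Iz Ixy,
      integral_add (Ix.const_mul a) (Iy.const_mul b),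
      integral_const_mul, integral_const_mul]
  rw [hsplit] at hIpos
  simp only [smul_eq_mul]
  linarith
end

section
/- Let r be a real random variable with P(r ≥ -1) = 1, P(r > 0) > 0, P(r < 0) > 0, and E[(ln(1+r))²] < ∞. Then the function υ_r(f) = Var[ln(1 + f r)] is strictly increasing on the interval (0,1). -/
/-!
Let `X_f'` be an independent copy of `X_f = log (1 + f r)`. Then `Var X_f = ½ 𝔼[(X_f - X_f')²]`,
and for fixed returns `a, b ≥ -1` the difference `log (1 + f a) - log (1 + f b)` vanishes at
`f = 0` and is strictly monotone in `f` (increasing if `b < a`, decreasing if `a < b`), so its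
square is nondecreasing on `[0, 1)` and strictly increasing as soon as `a ≠ b`. The event
`{r > 0} × {r < 0}` has positive product probability, which makes the inequality of the
variances strict.
-/

open MeasureTheory ProbabilityTheory Real Filter Topology

section IndependentCopy

variable {Ω : Type*} [MeasurableSpace Ω] {P : Measure Ω} [IsProbabilityMeasure P] {X Y : Ω → ℝ}

lemma integrable_sq_sub_prod (hX : MemLp X 2 P) :
    Integrable (fun z : Ω × Ω => (X z.1 - X z.2) ^ 2) (P.prod P) :=
  ((hX.comp_fst P).sub (hX.comp_snd P)).integrable_sq

lemma variance_eq_half_integral_sq_sub_prod (hX : MemLp X 2 P) :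
    variance X P = 2⁻¹ * ∫ z, (X z.1 - X z.2) ^ 2 ∂(P.prod P) := by
  have hsum := variance_add_prod hX hX.neg
  have hX1 := hX.integrable one_le_two
  have hmean : ∫ z, (X z.1 + (-X) z.2) ∂(P.prod P) = 0 := by
    rw [integral_add (hX1.comp_fst P) (hX1.neg.comp_snd P), integral_fun_fst, integral_fun_snd]
    simp [integral_neg]
  rw [variance_neg, variance_of_integral_eq_zero (by fun_prop) hmean] at hsum
  simp only [Pi.neg_apply, ← sub_eq_add_neg] at hsum
  linarith

lemma variance_lt_variance_of_ae_sq_sub_le (hX : MemLp X 2 P) (hY : MemLp Y 2 P)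
    (hle : ∀ᵐ z ∂(P.prod P), (X z.1 - X z.2) ^ 2 ≤ (Y z.1 - Y z.2) ^ 2)
    (hlt : 0 < P.prod P {z | (X z.1 - X z.2) ^ 2 < (Y z.1 - Y z.2) ^ 2}) :
    variance X P < variance Y P := by
  rw [variance_eq_half_integral_sq_sub_prod hX, variance_eq_half_integral_sq_sub_prod hY,
    ← sub_pos, ← mul_sub, ← integral_sub (integrable_sq_sub_prod hY) (integrable_sq_sub_prod hX)]
  refine mul_pos (by norm_num) ((integral_pos_iff_support_of_nonneg_ae ?_
    ((integrable_sq_sub_prod hY).sub (integrable_sq_sub_prod hX))).2 ?_)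
  · filter_upwards [hle] with z hz using sub_nonneg.2 hz
  · exact hlt.trans_le (measure_mono fun z hz => (sub_pos.2 hz).ne')

end IndependentCopy

section LogReturn

lemma one_add_mul_pos {a f : ℝ} (ha : -1 ≤ a) (hf0 : 0 ≤ f) (hf1 : f < 1) : 0 < 1 + f * a := by
  nlinarith

lemma strictMonoOn_log_one_add_mul_sub {a b : ℝ} (ha : -1 ≤ a) (hb : -1 ≤ b) (hba : b < a) :
    StrictMonoOn (fun f => log (1 + f * a) - log (1 + f * b)) (Set.Ico 0 1) := by
  rintro f ⟨hf0, hf1⟩ g ⟨hg0, hg1⟩ hfg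
  have hfa := one_add_mul_pos ha hf0 hf1
  have hfb := one_add_mul_pos hb hf0 hf1
  have hga := one_add_mul_pos ha hg0 hg1
  have hgb := one_add_mul_pos hb hg0 hg1
  -- the products differ by `(g - f) * (a - b)`
  have hcross : (1 + f * a) * (1 + g * b) < (1 + g * a) * (1 + f * b) := by nlinarith
  have hlog := log_lt_log (mul_pos hfa hgb) hcross
  rw [log_mul hfa.ne' hgb.ne', log_mul hga.ne' hfb.ne'] at hlog
  dsimp only
  linarith

lemma sq_log_one_add_mul_sub_lt {a b f g : ℝ} (ha : -1 ≤ a) (hb : -1 ≤ b) (hab : a ≠ b)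
    (hf : 0 ≤ f) (hfg : f < g) (hg : g < 1) :
    (log (1 + f * a) - log (1 + f * b)) ^ 2 < (log (1 + g * a) - log (1 + g * b)) ^ 2 := by
  wlog hba : b < a generalizing a b
  · have := this hb ha hab.symm (lt_of_le_of_ne (not_lt.1 hba) hab)
    rwa [sub_sq_comm (log (1 + f * b)), sub_sq_comm (log (1 + g * b))] at this
  have hmono := strictMonoOn_log_one_add_mul_sub ha hb hba
  have hf0 : 0 ≤ log (1 + f * a) - log (1 + f * b) := by
    simpa using hmono.monotoneOn ⟨le_rfl, one_pos⟩ ⟨hf, hfg.trans hg⟩ hf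
  exact pow_lt_pow_left₀ (hmono ⟨hf, hfg.trans hg⟩ ⟨hf.trans hfg.le, hg⟩ hfg) hf0 two_ne_zero

lemma sq_log_one_add_mul_sub_le {a b f g : ℝ} (ha : -1 ≤ a) (hb : -1 ≤ b)
    (hf : 0 ≤ f) (hfg : f < g) (hg : g < 1) :
    (log (1 + f * a) - log (1 + f * b)) ^ 2 ≤ (log (1 + g * a) - log (1 + g * b)) ^ 2 := by
  rcases eq_or_ne a b with rfl | hab
  · simp
  · exact (sq_log_one_add_mul_sub_lt ha hb hab hf hfg hg).le

lemma abs_log_one_add_mul_le {a f : ℝ} (ha : -1 ≤ a) (hf0 : 0 ≤ f) (hf1 : f < 1) :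
    |log (1 + f * a)| ≤ |log (1 - f)| + |log (1 + a)| := by
  have hpos := one_add_mul_pos ha hf0 hf1
  have hlower : log (1 - f) ≤ log (1 + f * a) := log_le_log (by linarith) (by nlinarith)
  have hupper : log (1 + f * a) ≤ |log (1 + a)| := by
    rcases le_or_gt 0 a with ha0 | ha0
    · exact (log_le_log hpos (by nlinarith)).trans (le_abs_self _)
    · exact (log_nonpos hpos.le (by nlinarith)).trans (abs_nonneg _)
  rw [abs_le]
  constructor <;> linarith [neg_abs_le (log (1 - f)), abs_nonneg (log (1 - f)),
    abs_nonneg (log (1 + a))]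

lemma memLp_two_log_one_add_mul {Ω : Type*} [MeasurableSpace Ω] {P : Measure Ω}
    [IsFiniteMeasure P] {r : Ω → ℝ} (hmeas : Measurable r) (h1 : ∀ᵐ ω ∂P, -1 ≤ r ω)
    (hsq : Integrable (fun ω => log (1 + r ω) ^ 2) P) {f : ℝ} (hf0 : 0 ≤ f) (hf1 : f < 1) :
    MemLp (fun ω => log (1 + f * r ω)) 2 P := by
  have hL : MemLp (fun ω => log (1 + r ω)) 2 P :=
    (memLp_two_iff_integrable_sq (hmeas.const_add 1).log.aestronglyMeasurable).2 hsq
  refine ((memLp_const |log (1 - f)|).add hL.abs).of_le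
    ((hmeas.const_mul f).const_add 1).log.aestronglyMeasurable ?_
  filter_upwards [h1] with ω hω
  exact (abs_log_one_add_mul_le hω hf0 hf1).trans (le_abs_self _)

end LogReturn

/-- Under the standing assumptions on the return `r`,
the asymptotic variance `υ_r(f) = Var[log(1 + f r)]` is strictly increasing on `(0,1)`. -/
theorem asymptotic_variance_strictMonoOn
    {Ω : Type*} [MeasurableSpace Ω] (P : Measure Ω) [IsProbabilityMeasure P]
    (r : Ω → ℝ) (hmeas : Measurable r)
    (h1 : ∀ᵐ ω ∂P, -1 ≤ r ω)
    (hpos : 0 < P {ω | 0 < r ω})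
    (hneg : 0 < P {ω | r ω < 0})
    (hsq : Integrable (fun ω => (Real.log (1 + r ω)) ^ 2) P) :
    StrictMonoOn
      (fun f => variance (fun ω => Real.log (1 + f * r ω)) P)
      (Set.Ioo (0 : ℝ) 1) := by
  intro f hf g hg hfg
  have hfst : ∀ᵐ z ∂(P.prod P), -1 ≤ r z.1 := Measure.quasiMeasurePreserving_fst.ae h1
  have hsnd : ∀ᵐ z ∂(P.prod P), -1 ≤ r z.2 := Measure.quasiMeasurePreserving_snd.ae h1
  have hrect : 0 < P.prod P ({ω | 0 < r ω} ×ˢ {ω | r ω < 0}) := by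
    rw [Measure.prod_prod]
    exact ENNReal.mul_pos hpos.ne' hneg.ne'
  apply variance_lt_variance_of_ae_sq_sub_le
    (memLp_two_log_one_add_mul hmeas h1 hsq hf.1.le hf.2)
    (memLp_two_log_one_add_mul hmeas h1 hsq hg.1.le hg.2)
  · filter_upwards [hfst, hsnd] with z hz1 hz2
    exact sq_log_one_add_mul_sub_le hz1 hz2 hf.1.le hfg hg.2
  · refine hrect.trans_le (measure_mono_ae ?_)
    filter_upwards [hfst, hsnd] with z hz1 hz2 ⟨hpos_z, hneg_z⟩
    exact sq_log_one_add_mul_sub_lt hz1 hz2 (hneg_z.out.trans hpos_z.out).ne' hf.1.le hfg hg.2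
end

section
/- Let r be a real random variable with P(r > 0) > 0 and P(r < 0) > 0, and let F and G be strictly increasing real functions defined on an interval containing the essential range of r, such that F(r), G(r) and F(r)·G(r) are integrable. Then E[F(r)G(r)] > E[F(r)]·E[G(r)]. -/
open MeasureTheory ProbabilityTheory Real Filter Topology

/-- strict covariance inequality: if `r` is genuinely two-sided
(`P(r>0)>0`, `P(r<0)>0`) and `F`, `G` are strictly increasing on an interval
containing the (essential) range of `r`, with `F(r)`, `G(r)`, `F(r)G(r)` integrable,
then `E[F(r)G(r)] > E[F(r)] E[G(r)]`. -/
theorem strict_covariance_inequality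
    {Ω : Type*} [MeasurableSpace Ω] (P : Measure Ω) [IsProbabilityMeasure P]
    (r : Ω → ℝ) (hmeas : Measurable r)
    (hpos : 0 < P {ω | 0 < r ω})
    (hneg : 0 < P {ω | r ω < 0})
    (I : Set ℝ) (hI : I.OrdConnected) (hrI : ∀ᵐ ω ∂P, r ω ∈ I)
    (F G : ℝ → ℝ)
    (hF : StrictMonoOn F I) (hG : StrictMonoOn G I)
    (hFi : Integrable (fun ω => F (r ω)) P)
    (hGi : Integrable (fun ω => G (r ω)) P)
    (hFGi : Integrable (fun ω => F (r ω) * G (r ω)) P) :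
    (∫ ω, F (r ω) ∂P) * (∫ ω, G (r ω) ∂P) < ∫ ω, F (r ω) * G (r ω) ∂P := by
  set Q : Measure (Ω × Ω) := P.prod P with hQ
  set H : Ω × Ω → ℝ := fun z => (F (r z.1) - F (r z.2)) * (G (r z.1) - G (r z.2)) with hH
  have hc : Integrable (fun _ : Ω => (1 : ℝ)) P := integrable_const 1
  -- four integrable pieces
  have hA : Integrable (fun z : Ω × Ω => F (r z.1) * G (r z.1)) Q := by
    have := hFGi.mul_prod hc (ν := P)
    simpa using this
  have hB : Integrable (fun z : Ω × Ω => F (r z.2) * G (r z.2)) Q := by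
    have := hc.mul_prod hFGi (ν := P)
    simpa using this
  have hC : Integrable (fun z : Ω × Ω => F (r z.1) * G (r z.2)) Q := hFi.mul_prod hGi
  have hD : Integrable (fun z : Ω × Ω => G (r z.1) * F (r z.2)) Q := hGi.mul_prod hFi
  have hHeq : H = fun z : Ω × Ω =>
      (F (r z.1) * G (r z.1) - F (r z.1) * G (r z.2)) -
        (G (r z.1) * F (r z.2)) + F (r z.2) * G (r z.2) := by
    funext z; simp only [hH]; ring
  have hHint : Integrable H Q := by
    rw [hHeq]; exact ((hA.sub hC).sub hD).add hB
  -- the value of ∫ H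
  have hIA : ∫ z, F (r z.1) * G (r z.1) ∂Q = ∫ ω, F (r ω) * G (r ω) ∂P := by
    have := integral_prod_mul (μ := P) (ν := P) (fun ω => F (r ω) * G (r ω))
      (fun _ => (1 : ℝ))
    simpa using this
  have hIB : ∫ z, F (r z.2) * G (r z.2) ∂Q = ∫ ω, F (r ω) * G (r ω) ∂P := by
    have := integral_prod_mul (μ := P) (ν := P) (fun _ => (1 : ℝ))
      (fun ω => F (r ω) * G (r ω))
    simpa using this
  have hIC : ∫ z, F (r z.1) * G (r z.2) ∂Q
      = (∫ ω, F (r ω) ∂P) * ∫ ω, G (r ω) ∂P := by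
    rw [hQ]
    exact integral_prod_mul (fun ω => F (r ω)) (fun ω => G (r ω))
  have hID : ∫ z, G (r z.1) * F (r z.2) ∂Q
      = (∫ ω, G (r ω) ∂P) * ∫ ω, F (r ω) ∂P := by
    rw [hQ]
    exact integral_prod_mul (fun ω => G (r ω)) (fun ω => F (r ω))
  have hIH : ∫ z, H z ∂Q =
      2 * (∫ ω, F (r ω) * G (r ω) ∂P) -
        2 * ((∫ ω, F (r ω) ∂P) * ∫ ω, G (r ω) ∂P) := by
    have h2 : Integrable (fun z : Ω × Ω =>
        F (r z.1) * G (r z.1) - F (r z.1) * G (r z.2)) Q := hA.sub hC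
    have h1 : Integrable (fun z : Ω × Ω =>
        F (r z.1) * G (r z.1) - F (r z.1) * G (r z.2) - G (r z.1) * F (r z.2)) Q := h2.sub hD
    simp only [hHeq]
    rw [integral_add h1 hB, integral_sub h2 hD, integral_sub hA hC, hIA, hIB, hIC, hID]
    ring
  -- a.e. both coordinates land in I
  set t : Set Ω := toMeasurable P {ω | r ω ∉ I} with ht
  have htnull : P t = 0 := by
    rw [ht, measure_toMeasurable]
    exact hrI
  have htm : MeasurableSet t := measurableSet_toMeasurable _ _
  have htsub : {ω | r ω ∉ I} ⊆ t := subset_toMeasurable _ _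
  have hQnull : Q {z : Ω × Ω | r z.1 ∉ I ∨ r z.2 ∉ I} = 0 := by
    have h1 : Q (t ×ˢ (Set.univ : Set Ω)) = 0 := by
      rw [hQ, Measure.prod_prod, htnull, zero_mul]
    have h2 : Q ((Set.univ : Set Ω) ×ˢ t) = 0 := by
      rw [hQ, Measure.prod_prod, htnull, mul_zero]
    refine measure_mono_null ?_ (measure_union_null h1 h2)
    rintro ⟨a, b⟩ (h | h)
    · exact Or.inl ⟨htsub h, trivial⟩
    · exact Or.inr ⟨trivial, htsub h⟩
  have haeQ : ∀ᵐ z ∂Q, r z.1 ∈ I ∧ r z.2 ∈ I := by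
    have := (measure_eq_zero_iff_ae_notMem (μ := Q)).mp hQnull
    filter_upwards [this] with z hz
    simp only [Set.mem_setOf_eq, not_or, not_not] at hz
    exact hz
  have hnonneg : 0 ≤ᵐ[Q] H := by
    filter_upwards [haeQ] with z hz
    rcases le_total (r z.1) (r z.2) with h | h
    · have hf : F (r z.1) ≤ F (r z.2) := hF.monotoneOn hz.1 hz.2 h
      have hg : G (r z.1) ≤ G (r z.2) := hG.monotoneOn hz.1 hz.2 h
      show 0 ≤ (F (r z.1) - F (r z.2)) * (G (r z.1) - G (r z.2))
      nlinarith [mul_nonneg (sub_nonneg.mpr hf) (sub_nonneg.mpr hg)]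
    · have hf : F (r z.2) ≤ F (r z.1) := hF.monotoneOn hz.2 hz.1 h
      have hg : G (r z.2) ≤ G (r z.1) := hG.monotoneOn hz.2 hz.1 h
      show 0 ≤ (F (r z.1) - F (r z.2)) * (G (r z.1) - G (r z.2))
      exact mul_nonneg (by linarith) (by linarith)
  -- positive-measure set where H > 0
  set A : Set Ω := {ω | 0 < r ω} \ t with hA'
  set B : Set Ω := {ω | r ω < 0} \ t with hB'
  have hPA : 0 < P A := by
    rw [hA', measure_diff_null htnull]; exact hpos
  have hPB : 0 < P B := by
    rw [hB', measure_diff_null htnull]; exact hneg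
  have hQS : 0 < Q (A ×ˢ B) := by
    rw [hQ, Measure.prod_prod]
    exact ENNReal.mul_pos hPA.ne' hPB.ne'
  have hsubsupp : A ×ˢ B ⊆ Function.support H := by
    rintro ⟨a, b⟩ ⟨ha, hb⟩
    have haI : r a ∈ I := by
      by_contra h; exact ha.2 (htsub h)
    have hbI : r b ∈ I := by
      by_contra h; exact hb.2 (htsub h)
    have hab : r b < r a := lt_trans hb.1 ha.1
    have hf : F (r b) < F (r a) := hF hbI haI hab
    have hg : G (r b) < G (r a) := hG hbI haI hab
    have : 0 < H (a, b) := mul_pos (by simpa using sub_pos.mpr hf) (by simpa using sub_pos.mpr hg)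
    exact ne_of_gt this
  have hsupp : 0 < Q (Function.support H) :=
    lt_of_lt_of_le hQS (measure_mono hsubsupp)
  have hpos' : 0 < ∫ z, H z ∂Q :=
    (integral_pos_iff_support_of_nonneg_ae hnonneg hHint).mpr hsupp
  rw [hIH] at hpos'
  linarith
end

section
/- Let r be a real random variable with P(r ≥ -1) = 1, P(r > 0) > 0, P(r < 0) > 0, and E[(ln(1+r))²] < ∞. Then the function g_r(f) = E[ln(1 + f r)] is twice differentiable on (0,1) with g_r'(f) = E[r/(1 + f r)] and g_r''(f) = −E[r²/(1 + f r)²], and the function υ_r(f) = Var[ln(1 + f r)] is differentiable on (0,1) with (1/2)·υ_r'(f) = E[r·ln(1 + f r)/(1 + f r)] − E[ln(1 + f r)]·E[r/(1 + f r)]. -/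
/-!
For `x` in a compact interval `[a, b] ⊂ (0, 1)` and `r ≥ -1`, the derivative `r / (1 + x r)` of
`x ↦ log (1 + x r)` is bounded by `max (1 / a) (1 / (1 - b))`, and
`|log (1 + x r)| ≤ |log (1 + r)| + |log (1 - b)|` is square integrable. These dominating functions
allow differentiating `E[log (1 + x r)]`, `E[r / (1 + x r)]` and `E[log (1 + x r) ^ 2]` under the
integral sign, and `Var[log (1 + x r)] = E[log (1 + x r) ^ 2] - E[log (1 + x r)] ^ 2`.
-/

open MeasureTheory ProbabilityTheory Real Filter Topology

section Pointwise

variable {ρ x : ℝ}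

lemma one_add_mul_pos_s3 (hρ : -1 ≤ ρ) (hx : x ∈ Set.Ico 0 1) : 0 < 1 + x * ρ := by
  nlinarith [hx.1, hx.2]

lemma abs_div_one_add_mul_le {a b : ℝ} (hρ : -1 ≤ ρ) (ha : 0 < a) (hb : b < 1)
    (hx : x ∈ Set.Icc a b) : |ρ / (1 + x * ρ)| ≤ max (1 / a) (1 / (1 - b)) := by
  obtain ⟨hax, hxb⟩ := hx
  have hpos : 0 < 1 + x * ρ := one_add_mul_pos_s3 hρ ⟨by linarith, by linarith⟩
  rw [abs_div, abs_of_pos hpos, div_le_iff₀ hpos]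
  rcases le_or_gt 0 ρ with hρ₀ | hρ₀
  · calc |ρ| = ρ := abs_of_nonneg hρ₀
      _ ≤ 1 / a * (1 + x * ρ) := by rw [div_mul_eq_mul_div, le_div_iff₀ ha]; nlinarith
      _ ≤ _ := by gcongr; exact le_max_left _ _
  · calc |ρ| = -ρ := abs_of_neg hρ₀
      _ ≤ 1 / (1 - b) * (1 + x * ρ) := by
          rw [div_mul_eq_mul_div, le_div_iff₀ (by linarith)]; nlinarith
      _ ≤ _ := by gcongr; exact le_max_right _ _

lemma abs_log_one_add_mul_le_s3 {b : ℝ} (hρ : -1 ≤ ρ) (hx₀ : 0 ≤ x) (hxb : x ≤ b) (hb : b < 1) :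
    |log (1 + x * ρ)| ≤ |log (1 + ρ)| + |log (1 - b)| := by
  rcases le_or_gt 0 ρ with hρ₀ | hρ₀
  · have hlog : log (1 + x * ρ) ≤ log (1 + ρ) := log_le_log (by nlinarith) (by nlinarith)
    rw [abs_of_nonneg (log_nonneg (by nlinarith))]
    linarith [le_abs_self (log (1 + ρ)), abs_nonneg (log (1 - b))]
  · have hlog : log (1 - b) ≤ log (1 + x * ρ) := log_le_log (by linarith) (by nlinarith)
    rw [abs_of_nonpos (log_nonpos (by nlinarith) (by nlinarith) : log (1 + x * ρ) ≤ 0),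
      abs_of_nonpos (log_nonpos (by linarith) (by linarith) : log (1 - b) ≤ 0)]
    linarith [abs_nonneg (log (1 + ρ))]

lemma hasDerivAt_log_one_add_mul (h : 0 < 1 + x * ρ) :
    HasDerivAt (fun y => log (1 + y * ρ)) (ρ / (1 + x * ρ)) x := by
  simpa using (((hasDerivAt_id x).mul_const ρ).const_add 1).log h.ne'

lemma hasDerivAt_div_one_add_mul (h : 0 < 1 + x * ρ) :
    HasDerivAt (fun y => ρ / (1 + y * ρ)) (-(ρ ^ 2 / (1 + x * ρ) ^ 2)) x := by
  have hden : HasDerivAt (fun y => 1 + y * ρ) ρ x := by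
    simpa using ((hasDerivAt_id x).mul_const ρ).const_add 1
  exact ((hasDerivAt_const x ρ).fun_div hden h.ne').congr_deriv (by ring)

end Pointwise

lemma exists_Icc_mem_nhds_of_mem_Ioo {f : ℝ} (hf : f ∈ Set.Ioo 0 1) :
    ∃ a b, 0 < a ∧ b < 1 ∧ Set.Icc a b ∈ 𝓝 f := by
  obtain ⟨a, b, hfab, hnhds, hsub⟩ := exists_Icc_mem_subset_of_mem_nhds (Ioo_mem_nhds hf.1 hf.2)
  have hab : a ≤ b := hfab.1.trans hfab.2
  exact ⟨a, b, (hsub ⟨le_rfl, hab⟩).1, (hsub ⟨hab, le_rfl⟩).2, hnhds⟩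

section Integrals

variable {Ω : Type*} [MeasurableSpace Ω] {P : Measure Ω} {r : Ω → ℝ}

lemma memLp_log_one_add_mul (hmeas : Measurable r) (h1 : ∀ᵐ ω ∂P, -1 ≤ r ω)
    [IsFiniteMeasure P] {p : ENNReal} (hlog : MemLp (fun ω => log (1 + r ω)) p P)
    {x : ℝ} (hx : x ∈ Set.Ico 0 1) : MemLp (fun ω => log (1 + x * r ω)) p P := by
  refine (hlog.norm.add (memLp_const |log (1 - x)|)).of_le
    (Measurable.aestronglyMeasurable (by fun_prop)) ?_
  filter_upwards [h1] with ω hω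
  rw [norm_eq_abs, Pi.add_apply, norm_of_nonneg (by positivity), norm_eq_abs]
  exact abs_log_one_add_mul_le_s3 hω hx.1 le_rfl hx.2

lemma integrable_div_one_add_mul (hmeas : Measurable r) (h1 : ∀ᵐ ω ∂P, -1 ≤ r ω)
    [IsFiniteMeasure P] {x : ℝ} (hx : x ∈ Set.Ioo 0 1) :
    Integrable (fun ω => r ω / (1 + x * r ω)) P := by
  refine .of_bound (Measurable.aestronglyMeasurable (by fun_prop)) (max (1 / x) (1 / (1 - x))) ?_
  filter_upwards [h1] with ω hω
  exact abs_div_one_add_mul_le hω hx.1 hx.2 ⟨le_rfl, le_rfl⟩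

lemma hasDerivAt_integral_log_one_add_mul (hmeas : Measurable r) (h1 : ∀ᵐ ω ∂P, -1 ≤ r ω)
    [IsFiniteMeasure P] (hlog : Integrable (fun ω => log (1 + r ω)) P)
    {f : ℝ} (hf : f ∈ Set.Ioo 0 1) :
    HasDerivAt (fun x => ∫ ω, log (1 + x * r ω) ∂P) (∫ ω, r ω / (1 + f * r ω) ∂P) f := by
  obtain ⟨a, b, ha, hb, hnhds⟩ := exists_Icc_mem_nhds_of_mem_Ioo hf
  have hint : Integrable (fun ω => log (1 + f * r ω)) P :=
    memLp_one_iff_integrable.1 <|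
      memLp_log_one_add_mul hmeas h1 (memLp_one_iff_integrable.2 hlog) (Set.Ioo_subset_Ico_self hf)
  refine (hasDerivAt_integral_of_dominated_loc_of_deriv_le (F := fun x ω => log (1 + x * r ω))
    (F' := fun x ω => r ω / (1 + x * r ω)) hnhds
    (.of_forall fun _ => Measurable.aestronglyMeasurable (by fun_prop)) hint
    (Measurable.aestronglyMeasurable (by fun_prop)) ?_
    (integrable_const (max (1 / a) (1 / (1 - b)))) ?_).2
  · filter_upwards [h1] with ω hω x hx
    exact abs_div_one_add_mul_le hω ha hb hx
  · filter_upwards [h1] with ω hω x hx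
    exact hasDerivAt_log_one_add_mul (one_add_mul_pos_s3 hω ⟨ha.le.trans hx.1, hx.2.trans_lt hb⟩)

lemma hasDerivAt_integral_div_one_add_mul (hmeas : Measurable r) (h1 : ∀ᵐ ω ∂P, -1 ≤ r ω)
    [IsFiniteMeasure P] {f : ℝ} (hf : f ∈ Set.Ioo 0 1) :
    HasDerivAt (fun x => ∫ ω, r ω / (1 + x * r ω) ∂P)
      (-∫ ω, r ω ^ 2 / (1 + f * r ω) ^ 2 ∂P) f := by
  obtain ⟨a, b, ha, hb, hnhds⟩ := exists_Icc_mem_nhds_of_mem_Ioo hf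
  rw [← integral_neg]
  refine (hasDerivAt_integral_of_dominated_loc_of_deriv_le (F := fun x ω => r ω / (1 + x * r ω))
    (F' := fun x ω => -(r ω ^ 2 / (1 + x * r ω) ^ 2)) hnhds
    (.of_forall fun _ => Measurable.aestronglyMeasurable (by fun_prop))
    (integrable_div_one_add_mul hmeas h1 hf)
    (Measurable.aestronglyMeasurable (by fun_prop)) ?_
    (integrable_const (max (1 / a) (1 / (1 - b)) ^ 2)) ?_).2
  · filter_upwards [h1] with ω hω x hx
    rw [norm_neg, ← div_pow, norm_pow, norm_eq_abs]
    exact pow_le_pow_left₀ (abs_nonneg _) (abs_div_one_add_mul_le hω ha hb hx) 2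
  · filter_upwards [h1] with ω hω x hx
    exact hasDerivAt_div_one_add_mul (one_add_mul_pos_s3 hω ⟨ha.le.trans hx.1, hx.2.trans_lt hb⟩)

lemma hasDerivAt_integral_log_one_add_mul_sq (hmeas : Measurable r) (h1 : ∀ᵐ ω ∂P, -1 ≤ r ω)
    [IsFiniteMeasure P] (hlog : MemLp (fun ω => log (1 + r ω)) 2 P)
    {f : ℝ} (hf : f ∈ Set.Ioo 0 1) :
    HasDerivAt (fun x => ∫ ω, log (1 + x * r ω) ^ 2 ∂P)
      (2 * ∫ ω, r ω * log (1 + f * r ω) / (1 + f * r ω) ∂P) f := by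
  obtain ⟨a, b, ha, hb, hnhds⟩ := exists_Icc_mem_nhds_of_mem_Ioo hf
  set M := max (1 / a) (1 / (1 - b))
  have hM : 0 ≤ M := (one_div_pos.2 ha).le.trans (le_max_left _ _)
  rw [← integral_const_mul]
  refine (hasDerivAt_integral_of_dominated_loc_of_deriv_le
    (F := fun x ω => log (1 + x * r ω) ^ 2)
    (F' := fun x ω => 2 * (r ω * log (1 + x * r ω) / (1 + x * r ω))) hnhds
    (.of_forall fun _ => Measurable.aestronglyMeasurable (by fun_prop))
    (memLp_log_one_add_mul hmeas h1 hlog (Set.Ioo_subset_Ico_self hf)).integrable_sq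
    (Measurable.aestronglyMeasurable (by fun_prop)) ?_
    (((hlog.integrable one_le_two).abs.add (integrable_const |log (1 - b)|)).const_mul (2 * M))
    ?_).2
  · filter_upwards [h1] with ω hω x hx
    have hfrac := abs_div_one_add_mul_le hω ha hb hx
    rw [norm_mul, mul_div_right_comm, norm_mul, norm_two, norm_eq_abs, norm_eq_abs, mul_assoc]
    gcongr
    exact abs_log_one_add_mul_le_s3 hω (ha.le.trans hx.1) hx.2 hb
  · filter_upwards [h1] with ω hω x hx
    refine ((hasDerivAt_log_one_add_mul
      (one_add_mul_pos_s3 hω ⟨ha.le.trans hx.1, hx.2.trans_lt hb⟩)).fun_pow 2).congr_deriv ?_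
    norm_num
    ring

lemma hasDerivAt_variance_log_one_add_mul (hmeas : Measurable r) (h1 : ∀ᵐ ω ∂P, -1 ≤ r ω)
    [IsProbabilityMeasure P] (hlog : MemLp (fun ω => log (1 + r ω)) 2 P)
    {f : ℝ} (hf : f ∈ Set.Ioo 0 1) :
    HasDerivAt (fun x => variance (fun ω => log (1 + x * r ω)) P)
      (2 * ((∫ ω, r ω * log (1 + f * r ω) / (1 + f * r ω) ∂P)
        - (∫ ω, log (1 + f * r ω) ∂P) * (∫ ω, r ω / (1 + f * r ω) ∂P))) f := by
  have hvar : (fun x => variance (fun ω => log (1 + x * r ω)) P) =ᶠ[𝓝 f]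
      fun x => (∫ ω, log (1 + x * r ω) ^ 2 ∂P) - (∫ ω, log (1 + x * r ω) ∂P) ^ 2 := by
    filter_upwards [Ioo_mem_nhds hf.1 hf.2] with x hx
    exact variance_eq_sub (memLp_log_one_add_mul hmeas h1 hlog (Set.Ioo_subset_Ico_self hx))
  have hmean := hasDerivAt_integral_log_one_add_mul hmeas h1 (hlog.integrable one_le_two) hf
  refine (((hasDerivAt_integral_log_one_add_mul_sq hmeas h1 hlog hf).sub
    (hmean.fun_pow 2)).congr_of_eventuallyEq hvar).congr_deriv ?_
  norm_num
  ring

end Integrals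

theorem growth_rate_and_variance_derivatives_general
    {Ω : Type*} [MeasurableSpace Ω] (P : Measure Ω) [IsProbabilityMeasure P]
    (r : Ω → ℝ) (hmeas : Measurable r)
    (h1 : ∀ᵐ ω ∂P, -1 ≤ r ω)
    (hsq : Integrable (fun ω => (Real.log (1 + r ω)) ^ 2) P) :
    ∀ f ∈ Set.Ioo (0 : ℝ) 1,
      HasDerivAt (fun x => ∫ ω, Real.log (1 + x * r ω) ∂P)
        (∫ ω, r ω / (1 + f * r ω) ∂P) f
      ∧ HasDerivAt (fun x => ∫ ω, r ω / (1 + x * r ω) ∂P)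
        (-∫ ω, (r ω) ^ 2 / (1 + f * r ω) ^ 2 ∂P) f
      ∧ HasDerivAt (fun x => variance (fun ω => Real.log (1 + x * r ω)) P)
        (2 * ((∫ ω, r ω * Real.log (1 + f * r ω) / (1 + f * r ω) ∂P)
          - (∫ ω, Real.log (1 + f * r ω) ∂P) * (∫ ω, r ω / (1 + f * r ω) ∂P))) f := by
  intro f hf
  have hlog : MemLp (fun ω => log (1 + r ω)) 2 P :=
    (memLp_two_iff_integrable_sq (Measurable.aestronglyMeasurable (by fun_prop))).2 hsq
  exact ⟨hasDerivAt_integral_log_one_add_mul hmeas h1 (hlog.integrable one_le_two) hf,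
    hasDerivAt_integral_div_one_add_mul hmeas h1 hf,
    hasDerivAt_variance_log_one_add_mul hmeas h1 hlog hf⟩

/-- the growth rate `g_r(f) = E[log(1+f r)]` is twice differentiable on `(0,1)`
with `g_r'(f) = E[r/(1+fr)]` and `g_r''(f) = -E[r²/(1+fr)²]`, and the asymptotic variance
`υ_r(f) = Var[log(1+fr)]` is differentiable on `(0,1)` with
`(1/2)υ_r'(f) = E[r log(1+fr)/(1+fr)] - E[log(1+fr)] E[r/(1+fr)]`. -/
theorem growth_rate_and_variance_derivatives
    {Ω : Type*} [MeasurableSpace Ω] (P : Measure Ω) [IsProbabilityMeasure P]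
    (r : Ω → ℝ) (hmeas : Measurable r)
    (h1 : ∀ᵐ ω ∂P, -1 ≤ r ω)
    (hpos : 0 < P {ω | 0 < r ω})
    (hneg : 0 < P {ω | r ω < 0})
    (hsq : Integrable (fun ω => (Real.log (1 + r ω)) ^ 2) P) :
    ∀ f ∈ Set.Ioo (0 : ℝ) 1,
      HasDerivAt (fun x => ∫ ω, Real.log (1 + x * r ω) ∂P)
        (∫ ω, r ω / (1 + f * r ω) ∂P) f
      ∧ HasDerivAt (fun x => ∫ ω, r ω / (1 + x * r ω) ∂P)
        (-∫ ω, (r ω) ^ 2 / (1 + f * r ω) ^ 2 ∂P) f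
      ∧ HasDerivAt (fun x => variance (fun ω => Real.log (1 + x * r ω)) P)
        (2 * ((∫ ω, r ω * Real.log (1 + f * r ω) / (1 + f * r ω) ∂P)
          - (∫ ω, Real.log (1 + f * r ω) ∂P) * (∫ ω, r ω / (1 + f * r ω) ∂P))) f :=
  growth_rate_and_variance_derivatives_general P r hmeas h1 hsq
end

section
/- Let r be a real random variable with P(r ≥ -1) = 1, P(r > 0) > 0, P(r < 0) > 0, and E[r²] < ∞. Then lim_{f→0+} SR_r(f) = E[r]/√(Var[r]), where SR_r(f) = g_r(f)/√(υ_r(f)), g_r(f) = E[ln(1 + f r)], and υ_r(f) = Var[ln(1 + f r)]. -/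
open MeasureTheory ProbabilityTheory Real Filter Topology

/-!
Put `G_f = log (1 + f r) / f`. The Sharpe ratio is unchanged by positive scaling, so
`SR_r(f)` is the Sharpe ratio of `G_f`. As a difference quotient of `f ↦ log (1 + f r)` at `0`,
`G_f → r` pointwise, and since `r ≥ -1`, `|G_f| ≤ 2 |r|` for `f ≤ 1/2`. Dominated convergence
with the square-integrable bound `2 |r|` gives convergence of the first two moments of `G_f`,
hence of its mean and variance; the limit variance `Var r` is nonzero because `r` takes both
signs with positive probability.
-/

noncomputable def sharpeRatio {Ω : Type*} [MeasurableSpace Ω] (X : Ω → ℝ) (μ : Measure Ω) : ℝ :=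
  μ[X] / √(Var[X; μ])

namespace Real

lemma abs_log_one_add_le_two_mul_abs {u : ℝ} (hu : -(1 / 2) ≤ u) : |log (1 + u)| ≤ 2 * |u| := by
  have h1 : 0 < 1 + u := by linarith
  have hupper : log (1 + u) ≤ u := by linarith [log_le_sub_one_of_pos h1]
  have hlower : 1 - (1 + u)⁻¹ ≤ log (1 + u) := one_sub_inv_le_log_of_pos h1
  rcases le_or_gt 0 u with hu0 | hu0
  · rw [abs_of_nonneg (log_nonneg (by linarith)), abs_of_nonneg hu0]; linarith
  · have hlinear : 2 * u ≤ 1 - (1 + u)⁻¹ := by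
      have e : 1 - (1 + u)⁻¹ = u / (1 + u) := by field_simp; ring
      rw [e, le_div_iff₀ h1]; nlinarith
    rw [abs_of_nonpos (by linarith : log (1 + u) ≤ 0), abs_of_neg hu0]
    linarith

lemma tendsto_log_one_add_mul_div (a : ℝ) :
    Tendsto (fun t => log (1 + t * a) / t) (𝓝[≠] 0) (𝓝 a) := by
  have h : HasDerivAt (fun t => log (1 + t * a)) a 0 := by
    simpa using ((hasDerivAt_id (0 : ℝ)).mul_const a).const_add 1 |>.log (by simp)
  simpa [div_eq_inv_mul] using h.tendsto_slope_zero

end Real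

section SharpeRatio

variable {Ω : Type*} [MeasurableSpace Ω] {μ : Measure Ω}

lemma sharpeRatio_const_mul {c : ℝ} (hc : 0 < c) (X : Ω → ℝ) :
    sharpeRatio (fun ω => c * X ω) μ = sharpeRatio X μ := by
  rw [sharpeRatio, sharpeRatio, integral_const_mul, variance_const_mul, sqrt_mul (sq_nonneg c),
    sqrt_sq hc.le, mul_div_mul_left _ _ hc.ne']

lemma variance_ne_zero_of_measure_pos_of_measure_neg [IsFiniteMeasure μ] {X : Ω → ℝ}
    (hX : MemLp X 2 μ) (hpos : 0 < μ {ω | 0 < X ω}) (hneg : 0 < μ {ω | X ω < 0}) :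
    Var[X; μ] ≠ 0 := by
  intro hvar
  have hconst := ae_eq_integral_of_variance_eq_zero hX hvar
  rcases le_or_gt μ[X] 0 with hmean | hmean
  · refine hpos.ne' (measure_eq_zero_iff_ae_notMem.2 ?_)
    filter_upwards [hconst] with ω hω
    simpa [hω] using hmean
  · refine hneg.ne' (measure_eq_zero_iff_ae_notMem.2 ?_)
    filter_upwards [hconst] with ω hω
    simpa [hω] using hmean.le

variable [IsProbabilityMeasure μ] {ι : Type*} {l : Filter ι} [l.IsCountablyGenerated]
  {X : ι → Ω → ℝ} {Y g : Ω → ℝ}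

lemma tendsto_variance_of_dominated (hXm : ∀ᶠ t in l, AEStronglyMeasurable (X t) μ)
    (hbound : ∀ᶠ t in l, ∀ᵐ ω ∂μ, |X t ω| ≤ g ω) (hg : MemLp g 2 μ) (hY : MemLp Y 2 μ)
    (hlim : ∀ᵐ ω ∂μ, Tendsto (fun t => X t ω) l (𝓝 (Y ω))) :
    Tendsto (fun t => Var[X t; μ]) l (𝓝 Var[Y; μ]) := by
  have hmean : Tendsto (fun t => μ[X t]) l (𝓝 μ[Y]) :=
    tendsto_integral_filter_of_dominated_convergence g hXm hbound (hg.integrable one_le_two) hlim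
  have hbound_sq : ∀ᶠ t in l, ∀ᵐ ω ∂μ, ‖(X t ^ 2) ω‖ ≤ g ω ^ 2 := by
    filter_upwards [hbound] with t ht
    filter_upwards [ht] with ω hω
    simpa [sq_abs] using pow_le_pow_left₀ (abs_nonneg _) hω 2
  have hsq : Tendsto (fun t => μ[X t ^ 2]) l (𝓝 μ[Y ^ 2]) :=
    tendsto_integral_filter_of_dominated_convergence (g · ^ 2) (hXm.mono fun t h => h.pow 2)
      hbound_sq hg.integrable_sq (hlim.mono fun ω h => h.pow 2)
  have hX : ∀ᶠ t in l, MemLp (X t) 2 μ := by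
    filter_upwards [hXm, hbound] with t hm hb
    exact hg.of_le hm (hb.mono fun ω hω => hω.trans (le_abs_self _))
  rw [variance_eq_sub hY]
  refine (hsq.sub (hmean.pow 2)).congr' ?_
  filter_upwards [hX] with t ht
  rw [variance_eq_sub ht]

lemma tendsto_sharpeRatio_of_dominated (hXm : ∀ᶠ t in l, AEStronglyMeasurable (X t) μ)
    (hbound : ∀ᶠ t in l, ∀ᵐ ω ∂μ, |X t ω| ≤ g ω) (hg : MemLp g 2 μ) (hY : MemLp Y 2 μ)
    (hlim : ∀ᵐ ω ∂μ, Tendsto (fun t => X t ω) l (𝓝 (Y ω))) (hvar : Var[Y; μ] ≠ 0) :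
    Tendsto (fun t => sharpeRatio (X t) μ) l (𝓝 (sharpeRatio Y μ)) :=
  (tendsto_integral_filter_of_dominated_convergence g hXm hbound (hg.integrable one_le_two)
    hlim).div (tendsto_variance_of_dominated hXm hbound hg hY hlim).sqrt
    (sqrt_ne_zero'.2 ((variance_nonneg Y μ).lt_of_ne' hvar))

end SharpeRatio

/-- if `E[r²] < ∞`, then as `f → 0+`, the asymptotic Sharpe ratio
`SR_r(f) = g_r(f)/√(υ_r(f))` tends to the classical Sharpe ratio `E[r]/√(Var[r])`. -/
theorem sharpe_ratio_limit_at_zero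
    {Ω : Type*} [MeasurableSpace Ω] (P : Measure Ω) [IsProbabilityMeasure P]
    (r : Ω → ℝ) (hmeas : Measurable r)
    (h1 : ∀ᵐ ω ∂P, -1 ≤ r ω)
    (hpos : 0 < P {ω | 0 < r ω})
    (hneg : 0 < P {ω | r ω < 0})
    (hsq : Integrable (fun ω => (r ω) ^ 2) P) :
    Tendsto
      (fun f => (∫ ω, Real.log (1 + f * r ω) ∂P)
        / Real.sqrt (variance (fun ω => Real.log (1 + f * r ω)) P))
      (𝓝[>] (0 : ℝ))
      (𝓝 ((∫ ω, r ω ∂P) / Real.sqrt (variance r P))) := by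
  have hr : MemLp r 2 P := (memLp_two_iff_integrable_sq hmeas.aestronglyMeasurable).2 hsq
  have hbound : ∀ᶠ f in 𝓝[>] (0 : ℝ), ∀ᵐ ω ∂P, |log (1 + f * r ω) / f| ≤ 2 * |r ω| := by
    filter_upwards [Ioo_mem_nhdsGT (by norm_num : (0 : ℝ) < 1 / 2)] with f hf
    filter_upwards [h1] with ω hω
    rw [abs_div, abs_of_pos hf.1, div_le_iff₀ hf.1]
    calc _ ≤ 2 * |f * r ω| := abs_log_one_add_le_two_mul_abs (by nlinarith [hf.1, hf.2])
      _ = 2 * |r ω| * f := by rw [abs_mul, abs_of_pos hf.1]; ring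
  have hmeas_log (f : ℝ) : AEStronglyMeasurable (fun ω => log (1 + f * r ω) / f) P :=
    ((measurable_const.add (measurable_const.mul hmeas)).log.div_const f).aestronglyMeasurable
  have hlim : Tendsto (fun f => sharpeRatio (fun ω => log (1 + f * r ω) / f) P) (𝓝[>] 0)
      (𝓝 (sharpeRatio r P)) :=
    tendsto_sharpeRatio_of_dominated (.of_forall hmeas_log) hbound (hr.abs.const_mul 2) hr
      (.of_forall fun ω => (tendsto_log_one_add_mul_div (r ω)).mono_left (nhdsGT_le_nhdsNE 0))
      (variance_ne_zero_of_measure_pos_of_measure_neg hr hpos hneg)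
  refine hlim.congr' ?_
  filter_upwards [self_mem_nhdsWithin] with f (hf : 0 < f)
  rw [← sharpeRatio_const_mul hf]
  simp_rw [mul_div_cancel₀ _ hf.ne']
  rfl
end

section
/- Let p ∈ (1/2, 1). Then the function f ↦ (p·ln(1+f) + (1−p)·ln(1−f)) / (√(p(1−p))·(ln(1+f) − ln(1−f))) is strictly decreasing on (0,1). -/
/-!
Writing `A = log (1 + f)` and `B = log (1 - f)`, the numerator is `p (A - B) + B`, so the Sharpe
ratio equals `(p - w f) / √(p (1 - p))` with `w f = B / (B - A)` (`logLossShare`). The numerator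
of `w'` is, up to the positive factor `(1 - f) (1 + f)`, equal to
`(1 + f) log (1 + f) + (1 - f) log (1 - f)`, which is positive by strict convexity of
`x ↦ x log x` at the midpoint `1` of `1 - f` and `1 + f`. Hence `w` is strictly increasing.
-/

open Real

theorem one_add_mul_log_one_add_add_one_sub_mul_log_one_sub_pos {x : ℝ} (hx₀ : x ≠ 0)
    (hx : |x| ≤ 1) : 0 < (1 + x) * log (1 + x) + (1 - x) * log (1 - x) := by
  obtain ⟨hx₁, hx₂⟩ := abs_le.mp hx
  have h := strictConvexOn_mul_log.2 (x := 1 - x) (y := 1 + x)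
    (by simp only [Set.mem_Ici]; linarith) (by simp only [Set.mem_Ici]; linarith)
    (by intro h; exact hx₀ (by linarith)) (by norm_num : (0 : ℝ) < 1 / 2)
    (by norm_num : (0 : ℝ) < 1 / 2) (by norm_num)
  have hmid : 1 / 2 * (1 - x) + 1 / 2 * (1 + x) = 1 := by ring
  simp only [smul_eq_mul, hmid, one_mul, log_one] at h
  linarith

theorem log_one_sub_lt_log_one_add {x : ℝ} (hx : x ∈ Set.Ioo 0 1) :
    log (1 - x) < log (1 + x) :=
  log_lt_log (by linarith [hx.2]) (by linarith [hx.1])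

noncomputable def logLossShare (x : ℝ) : ℝ :=
  log (1 - x) / (log (1 - x) - log (1 + x))

theorem hasDerivAt_logLossShare {x : ℝ} (hx : x ∈ Set.Ioo 0 1) :
    HasDerivAt logLossShare
      (((1 + x) * log (1 + x) + (1 - x) * log (1 - x)) /
        ((1 - x) * (1 + x) * (log (1 - x) - log (1 + x)) ^ 2)) x := by
  have h₁ : 0 < 1 + x := by linarith [hx.1]
  have h₂ : 0 < 1 - x := by linarith [hx.2]
  have hden : log (1 - x) - log (1 + x) ≠ 0 := by linarith [log_one_sub_lt_log_one_add hx]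
  have hB : HasDerivAt (fun y => log (1 - y)) (-1 / (1 - x)) x :=
    ((hasDerivAt_id x).const_sub 1).log h₂.ne'
  have hA : HasDerivAt (fun y => log (1 + y)) (1 / (1 + x)) x :=
    ((hasDerivAt_id x).const_add 1).log h₁.ne'
  have hD : HasDerivAt (fun y => log (1 - y) - log (1 + y)) (-1 / (1 - x) - 1 / (1 + x)) x :=
    hB.sub hA
  refine (hB.div hD hden).congr_deriv ?_
  field_simp
  ring

theorem strictMonoOn_logLossShare : StrictMonoOn logLossShare (Set.Ioo 0 1) := by
  refine strictMonoOn_of_hasDerivWithinAt_pos (convex_Ioo 0 1)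
    (fun x hx => (hasDerivAt_logLossShare hx).continuousAt.continuousWithinAt)
    (by rw [interior_Ioo]; exact fun x hx => (hasDerivAt_logLossShare hx).hasDerivWithinAt) ?_
  rw [interior_Ioo]
  intro x hx
  have hnum := one_add_mul_log_one_add_add_one_sub_mul_log_one_sub_pos hx.1.ne'
    (abs_le.mpr ⟨by linarith [hx.1], hx.2.le⟩)
  have hden : log (1 - x) - log (1 + x) ≠ 0 := by linarith [log_one_sub_lt_log_one_add hx]
  have h₁ : 0 < 1 + x := by linarith [hx.1]
  have h₂ : 0 < 1 - x := by linarith [hx.2]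
  positivity

theorem bernoulli_sharpe_ratio_eq_sub_logLossShare (p : ℝ) {x : ℝ} (hx : x ∈ Set.Ioo 0 1) :
    (p * log (1 + x) + (1 - p) * log (1 - x)) / (√(p * (1 - p)) * (log (1 + x) - log (1 - x))) =
      (p - logLossShare x) / √(p * (1 - p)) := by
  have hden : log (1 + x) - log (1 - x) ≠ 0 := by linarith [log_one_sub_lt_log_one_add hx]
  have hden' : log (1 - x) - log (1 + x) ≠ 0 := by linarith [log_one_sub_lt_log_one_add hx]
  unfold logLossShare
  field_simp
  ring

/-- in the simple Bernoulli model with `p ∈ (1/2,1)`, the asymptotic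
Sharpe ratio `f ↦ (p log(1+f) + (1-p) log(1-f)) / (√(p(1-p)) (log(1+f) - log(1-f)))`
is strictly decreasing on `(0,1)`. -/
theorem bernoulli_sharpe_ratio_strictAnti
    (p : ℝ) (hp : p ∈ Set.Ioo (1 / 2 : ℝ) 1) :
    StrictAntiOn
      (fun f => (p * Real.log (1 + f) + (1 - p) * Real.log (1 - f))
        / (Real.sqrt (p * (1 - p)) * (Real.log (1 + f) - Real.log (1 - f))))
      (Set.Ioo (0 : ℝ) 1) := by
  intro a ha b hb hab
  have hsd : 0 < √(p * (1 - p)) := sqrt_pos.2 (mul_pos (by linarith [hp.1]) (by linarith [hp.2]))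
  simp only [bernoulli_sharpe_ratio_eq_sub_logLossShare p ha,
    bernoulli_sharpe_ratio_eq_sub_logLossShare p hb]
  exact div_lt_div_of_pos_right (by linarith [strictMonoOn_logLossShare ha hb hab]) hsd
end

section
/- For every f ∈ (0,1), (2/π)·∫₀^∞ ln((1−f) + f x²)/(1 + x²) dx = 2·ln(√f + √(1−f)). Consequently, the function G(f) = 2·ln(√f + √(1−f)) satisfies G(f) = G(1−f) > 0 for f ∈ (0,1), and its unique maximizer on (0,1) is f* = 1/2 with maximal value G(1/2) = ln 2. -/
/-!
Factoring out `a` reduces `∫₀^∞ log(a + b x²)/(1 + x²) dx` to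
`I(s) = ∫₀^∞ log(1 + s² x²)/(1 + x²) dx` with `s = √(b/a)`. Differentiating under the integral
sign and splitting into partial fractions gives `I'(s) = π/(1 + s)` for `s ≠ 1`, and `I(0) = 0`,
so `I(s) = π log(1 + s)`. The facts about `G` follow from
`(√f + √(1 - f))² = 1 + 2 √(f (1 - f))` and `f (1 - f) < 1/4` for `f ≠ 1/2`.
-/

open Real MeasureTheory Set Filter

lemma eq_of_hasDerivAt_zero_on_Ioo {f : ℝ → ℝ} {a b : ℝ} (hab : a ≤ b)
    (hf : ContinuousOn f (Icc a b)) (hf' : ∀ x ∈ Ioo a b, HasDerivAt f 0 x) : f b = f a := by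
  rcases hab.eq_or_lt with rfl | hlt
  · rfl
  obtain ⟨c, -, hc⟩ := exists_hasDerivAt_eq_slope f (fun _ => 0) hlt hf hf'
  rcases (div_eq_zero_iff.1 hc.symm) with h | h <;> linarith

lemma continuous_log_one_add_mul_sq_div (c : ℝ) (hc : 0 ≤ c) :
    Continuous fun x : ℝ => log (1 + c * x ^ 2) / (1 + x ^ 2) := by
  refine .div (.log (by fun_prop) fun x => ?_) (by fun_prop) fun x => by positivity
  nlinarith [mul_nonneg hc (sq_nonneg x)]

lemma integrable_log_one_add_mul_sq_div (c : ℝ) (hc : 0 ≤ c) :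
    Integrable fun x : ℝ => log (1 + c * x ^ 2) / (1 + x ^ 2) := by
  have hmaj : Integrable fun x : ℝ =>
      4 * (1 + c) ^ (1 / 4 : ℝ) * (1 + ‖x‖ ^ 2) ^ (-(3 / 2 : ℝ) / 2) :=
    (integrable_rpow_neg_one_add_norm_sq (by norm_num)).const_mul _
  refine hmaj.mono' (continuous_log_one_add_mul_sq_div c hc).aestronglyMeasurable
    (Eventually.of_forall fun x => ?_)
  have h1 : 0 < 1 + x ^ 2 := by positivity
  have hlog : 0 ≤ log (1 + c * x ^ 2) := log_nonneg (by nlinarith [sq_nonneg x])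
  have hle : log (1 + c * x ^ 2) ≤ 4 * ((1 + c) ^ (1 / 4 : ℝ) * (1 + x ^ 2) ^ (1 / 4 : ℝ)) := by
    calc log (1 + c * x ^ 2) ≤ (1 + c * x ^ 2) ^ (1 / 4 : ℝ) / (1 / 4) :=
          log_le_rpow_div (by positivity) (by norm_num)
      _ ≤ ((1 + c) * (1 + x ^ 2)) ^ (1 / 4 : ℝ) / (1 / 4) := by
          gcongr; nlinarith [sq_nonneg x]
      _ = _ := by rw [mul_rpow (by positivity) h1.le]; ring
  rw [norm_div, Real.norm_of_nonneg hlog, Real.norm_of_nonneg h1.le, Real.norm_eq_abs, sq_abs,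
    show -(3 / 2 : ℝ) / 2 = 1 / 4 - 1 by norm_num, rpow_sub_one h1.ne', div_le_iff₀ h1]
  exact hle.trans_eq (by field_simp)

lemma integral_Ioi_inv_one_add_mul_sq (s : ℝ) (hs : 0 < s) :
    ∫ x in Ioi (0 : ℝ), (1 + (s * x) ^ 2)⁻¹ = π / (2 * s) := by
  rw [integral_comp_mul_left_Ioi (fun y => (1 + y ^ 2)⁻¹) 0 hs, mul_zero,
    integral_Ioi_inv_one_add_sq, arctan_zero, smul_eq_mul]
  field_simp
  ring

lemma integral_Ioi_mul_sq_div (s : ℝ) (hs : 0 < s) (hs1 : s ≠ 1) :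
    ∫ x in Ioi (0 : ℝ), 2 * s * x ^ 2 / ((1 + s ^ 2 * x ^ 2) * (1 + x ^ 2)) = π / (1 + s) := by
  have h1 : 1 + s ≠ 0 := by positivity
  have h2 : 1 - s ≠ 0 := sub_ne_zero.2 (Ne.symm hs1)
  have h1s : 1 - s ^ 2 ≠ 0 := by
    rw [show 1 - s ^ 2 = (1 - s) * (1 + s) by ring]
    exact mul_ne_zero h2 h1
  have hsplit : ∀ x : ℝ, 2 * s * x ^ 2 / ((1 + s ^ 2 * x ^ 2) * (1 + x ^ 2))
      = 2 * s / (1 - s ^ 2) * ((1 + (s * x) ^ 2)⁻¹ - (1 + x ^ 2)⁻¹) := by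
    intro x
    field_simp
    ring
  simp_rw [hsplit]
  rw [integral_const_mul, integral_sub
    (integrable_inv_one_add_sq.comp_mul_left' hs.ne').integrableOn
    integrable_inv_one_add_sq.integrableOn,
    integral_Ioi_inv_one_add_mul_sq s hs, integral_Ioi_inv_one_add_sq, arctan_zero]
  field_simp
  ring

noncomputable def logQuadIntegral (s : ℝ) : ℝ :=
  ∫ x in Ioi (0 : ℝ), log (1 + s ^ 2 * x ^ 2) / (1 + x ^ 2)

lemma continuous_logQuadIntegral : Continuous logQuadIntegral := by
  refine continuous_iff_continuousAt.2 fun s₀ => ?_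
  set R := (|s₀| + 1) ^ 2
  refine continuousAt_of_dominated (bound := fun x => log (1 + R * x ^ 2) / (1 + x ^ 2))
    (Eventually.of_forall fun s =>
      (continuous_log_one_add_mul_sq_div _ (sq_nonneg s)).aestronglyMeasurable)
    ?_ (integrable_log_one_add_mul_sq_div R (by positivity)).integrableOn
    (Eventually.of_forall fun x => ?_)
  · filter_upwards [Metric.ball_mem_nhds s₀ one_pos] with s hs
    refine Eventually.of_forall fun x => ?_
    have hsR : s ^ 2 ≤ R := by
      rw [Metric.mem_ball, Real.dist_eq] at hs
      have : |s| ≤ |s₀| + 1 := by linarith [abs_sub_abs_le_abs_sub s s₀]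
      exact sq_le_sq' (by linarith [neg_abs_le s, abs_nonneg s]) (by linarith [le_abs_self s])
    rw [Real.norm_of_nonneg (div_nonneg (log_nonneg (by nlinarith [sq_nonneg (s * x)]))
      (by positivity))]
    gcongr
  · exact (((continuous_const.add (by fun_prop)).log fun s : ℝ =>
      (by positivity : 1 + s ^ 2 * x ^ 2 ≠ 0)).div_const _).continuousAt

lemma hasDerivAt_logQuadIntegral (s₀ : ℝ) (hs₀ : 0 < s₀) :
    HasDerivAt logQuadIntegral
      (∫ x in Ioi (0 : ℝ), 2 * s₀ * x ^ 2 / ((1 + s₀ ^ 2 * x ^ 2) * (1 + x ^ 2))) s₀ := by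
  refine (hasDerivAt_integral_of_dominated_loc_of_deriv_le
    (F' := fun s x => 2 * s * x ^ 2 / ((1 + s ^ 2 * x ^ 2) * (1 + x ^ 2)))
    (bound := fun x => 4 / s₀ * (1 + x ^ 2)⁻¹)
    (Metric.ball_mem_nhds s₀ (half_pos hs₀))
    (Eventually.of_forall fun s =>
      (continuous_log_one_add_mul_sq_div _ (sq_nonneg s)).aestronglyMeasurable)
    (integrable_log_one_add_mul_sq_div _ (sq_nonneg s₀)).integrableOn
    (Continuous.aestronglyMeasurable (by fun_prop (disch := intro x; positivity)))
    (Eventually.of_forall fun x s hs => ?_)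
    (integrable_inv_one_add_sq.const_mul _).integrableOn
    (Eventually.of_forall fun x s _ => ?_)).2
  · have hs : s₀ / 2 < s := by
      rw [Metric.mem_ball, Real.dist_eq, abs_lt] at hs
      linarith
    have hspos : 0 < s := by linarith
    have hnum : 2 * s * x ^ 2 ≤ 4 / s₀ * (1 + s ^ 2 * x ^ 2) := by
      have : 2 / s ≤ 4 / s₀ := by rw [div_le_div_iff₀ hspos hs₀]; linarith
      calc 2 * s * x ^ 2 ≤ 2 / s * (1 + s ^ 2 * x ^ 2) := by
            field_simp; nlinarith [sq_nonneg x]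
        _ ≤ _ := by gcongr
    rw [Real.norm_of_nonneg (by positivity), div_le_iff₀ (by positivity)]
    exact hnum.trans_eq (by field_simp)
  · have hd : HasDerivAt (fun s => 1 + s ^ 2 * x ^ 2) (2 * s * x ^ 2) s := by
      simpa using ((hasDerivAt_pow 2 s).mul_const (x ^ 2)).const_add 1
    exact ((hd.log (by positivity)).div_const (1 + x ^ 2)).congr_deriv (div_div _ _ _)

/-- The partial fractions of the derivative degenerate at `s = 1`; continuity of
`logQuadIntegral` carries the value at `s = 0` past that point. -/
lemma logQuadIntegral_eq (s : ℝ) (hs : 0 ≤ s) : logQuadIntegral s = π * log (1 + s) := by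
  set E : ℝ → ℝ := fun s => logQuadIntegral s - π * log (1 + s)
  have hE_cont : ContinuousOn E (Ici 0) :=
    continuous_logQuadIntegral.continuousOn.sub (continuousOn_const.mul
      (ContinuousOn.log (by fun_prop) fun x hx => by have : (0 : ℝ) ≤ x := hx; positivity))
  have hE_deriv : ∀ t, 0 < t → t ≠ 1 → HasDerivAt E 0 t := by
    intro t ht ht1
    have hlog : HasDerivAt (fun s => log (1 + s)) (1 / (1 + t)) t := by
      simpa using ((hasDerivAt_id t).const_add 1).log (by positivity)
    refine ((hasDerivAt_logQuadIntegral t ht).sub (hlog.const_mul π)).congr_deriv ?_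
    rw [integral_Ioi_mul_sq_div t ht ht1]
    ring
  have hE0 : E 0 = 0 := by simp [E, logQuadIntegral]
  have hE_const : ∀ a b, 0 ≤ a → a ≤ b → (1 ∉ Ioo a b) → E b = E a := fun a b ha hab h1 =>
    eq_of_hasDerivAt_zero_on_Ioo hab (hE_cont.mono fun x hx => ha.trans hx.1)
      fun x hx => hE_deriv x (ha.trans_lt hx.1) (by rintro rfl; exact h1 hx)
  have hE1 : E 1 = 0 := by rw [hE_const 0 1 le_rfl zero_le_one (by simp), hE0]
  have hEs : E s = 0 := by
    rcases le_total s 1 with hs1 | hs1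
    · rw [hE_const 0 s le_rfl hs (fun h => h.2.not_ge hs1), hE0]
    · rw [hE_const 1 s zero_le_one hs1 (fun h => h.1.false), hE1]
  exact sub_eq_zero.1 hEs

theorem integral_Ioi_log_add_mul_sq_div (a b : ℝ) (ha : 0 < a) (hb : 0 ≤ b) :
    ∫ x in Ioi (0 : ℝ), log (a + b * x ^ 2) / (1 + x ^ 2) = π * log (√a + √b) := by
  have hsa : 0 < √a := sqrt_pos.2 ha
  set s := √b / √a
  have hfactor : ∀ x : ℝ, log (a + b * x ^ 2) / (1 + x ^ 2)
      = log a * (1 + x ^ 2)⁻¹ + log (1 + s ^ 2 * x ^ 2) / (1 + x ^ 2) := by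
    intro x
    have : a + b * x ^ 2 = a * (1 + s ^ 2 * x ^ 2) := by
      rw [div_pow, sq_sqrt ha.le, sq_sqrt hb]; field_simp
    rw [this, log_mul ha.ne' (by positivity)]
    ring
  have hs : 1 + s = (√a + √b) / √a := by rw [add_div, div_self hsa.ne']
  simp_rw [hfactor]
  rw [integral_add (integrable_inv_one_add_sq.const_mul _).integrableOn
      (integrable_log_one_add_mul_sq_div _ (sq_nonneg s)).integrableOn,
    integral_const_mul, integral_Ioi_inv_one_add_sq, arctan_zero,
    ← logQuadIntegral, logQuadIntegral_eq s (by positivity), hs,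
    log_div (by positivity) hsa.ne', log_sqrt ha.le]
  ring

lemma two_mul_log_sqrt_add_sqrt_one_sub {f : ℝ} (h0 : 0 ≤ f) (h1 : f ≤ 1) :
    2 * log (√f + √(1 - f)) = log (1 + 2 * √(f * (1 - f))) := by
  have hsq : (√f + √(1 - f)) ^ 2 = 1 + 2 * √(f * (1 - f)) := by
    rw [add_sq, sq_sqrt h0, sq_sqrt (sub_nonneg.2 h1), sqrt_mul h0]
    ring
  rw [← hsq, log_pow]
  norm_num

/-- for `f ∈ (0,1)`,
`(2/π) ∫₀^∞ log((1-f) + f x²)/(1+x²) dx = 2 log(√f + √(1-f))`;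
consequently `G(f) = 2 log(√f + √(1-f))` satisfies `G(f) = G(1-f) > 0` on `(0,1)`,
and its unique maximizer on `(0,1)` is `f* = 1/2` with `G(1/2) = log 2`. -/
theorem squared_cauchy_growth_rate :
    (∀ f ∈ Set.Ioo (0 : ℝ) 1,
      (2 / Real.pi) * ∫ x in Set.Ioi (0 : ℝ), Real.log ((1 - f) + f * x ^ 2) / (1 + x ^ 2)
        = 2 * Real.log (Real.sqrt f + Real.sqrt (1 - f)))
    ∧ (∀ f ∈ Set.Ioo (0 : ℝ) 1,
        2 * Real.log (Real.sqrt f + Real.sqrt (1 - f))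
          = 2 * Real.log (Real.sqrt (1 - f) + Real.sqrt (1 - (1 - f)))
        ∧ 0 < 2 * Real.log (Real.sqrt f + Real.sqrt (1 - f)))
    ∧ 2 * Real.log (Real.sqrt (1 / 2) + Real.sqrt (1 - 1 / 2)) = Real.log 2
    ∧ (∀ f ∈ Set.Ioo (0 : ℝ) 1, f ≠ 1 / 2 →
        2 * Real.log (Real.sqrt f + Real.sqrt (1 - f))
          < 2 * Real.log (Real.sqrt (1 / 2) + Real.sqrt (1 - 1 / 2))) := by
  have hhalf : 2 * log (√(1 / 2) + √(1 - 1 / 2)) = log (1 + 2 * √(1 / 4)) := by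
    rw [two_mul_log_sqrt_add_sqrt_one_sub (by norm_num) (by norm_num)]
    norm_num
  have hsqrt_quarter : √(1 / 4 : ℝ) = 1 / 2 := by
    rw [show (1 / 4 : ℝ) = (1 / 2) ^ 2 by norm_num, sqrt_sq (by norm_num)]
  refine ⟨fun f hf => ?_, fun f hf => ⟨?_, ?_⟩, ?_, fun f hf hne => ?_⟩
  · rw [integral_Ioi_log_add_mul_sq_div _ _ (sub_pos.2 hf.2) hf.1.le, add_comm √(1 - f)]
    field_simp [pi_ne_zero]
  · rw [sub_sub_cancel, add_comm]
  · rw [two_mul_log_sqrt_add_sqrt_one_sub hf.1.le hf.2.le]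
    have : 0 < f * (1 - f) := mul_pos hf.1 (sub_pos.2 hf.2)
    exact log_pos (by linarith [sqrt_pos.2 this])
  · rw [hhalf, hsqrt_quarter]
    norm_num
  · rw [hhalf, two_mul_log_sqrt_add_sqrt_one_sub hf.1.le hf.2.le]
    have hlt : f * (1 - f) < 1 / 4 := by
      nlinarith [sq_pos_of_ne_zero (sub_ne_zero.2 hne)]
    have := sqrt_lt_sqrt (mul_pos hf.1 (sub_pos.2 hf.2)).le hlt
    exact log_lt_log (by positivity) (by linarith)
end

section
/- For every integer n ≥ 1, the integral I_n = ∫₀^∞ (ln(1+u²))ⁿ / u² du is finite, and lim_{f→0+} f^{−1/2} · ∫₀^∞ (ln((1−f) + f x²))ⁿ / (1 + x²) dx = I_n. -/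
/-!
The substitution `u = √f x` turns `f^{-1/2} ∫₀^∞ log((1-f) + f x²)ⁿ / (1+x²) dx` into
`∫₀^∞ log(1-f+u²)ⁿ / (f+u²) du`, whose integrand tends to `log(1+u²)ⁿ / u²` as `f → 0+`.
Dominated convergence applies: where `u² ≥ f` the integrand is bounded by its limit, and where
`u² < f` we have `|log(1-f+u²)| ≤ 2f`, so it is bounded by `2ⁿ`. The limit is integrable, being
at most `1` on `(0, 1]` and `O((1+u²)^{-3/4})` at infinity since `log` grows slower than any power.
-/

open Real MeasureTheory Filter Topology Set

lemma pow_log_le_mul_rpow (n : ℕ) {x ε : ℝ} (hx : 1 ≤ x) (hε : 0 < ε) :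
    log x ^ n ≤ (n / ε) ^ n * x ^ ε := by
  rcases n.eq_zero_or_pos with rfl | hn
  · simpa using one_le_rpow hx hε.le
  have hεn : 0 < ε / n := by positivity
  calc log x ^ n ≤ ((n / ε) * x ^ (ε / n)) ^ n := by
        gcongr
        · exact log_nonneg hx
        · have h := log_le_rpow_div (x := x) (by linarith) hεn
          rwa [div_div_eq_mul_div, mul_div_assoc, mul_comm] at h
    _ = (n / ε) ^ n * x ^ ε := by
        rw [mul_pow, ← rpow_natCast (x ^ _), ← rpow_mul (by linarith),
          div_mul_cancel₀ _ (by positivity)]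

lemma log_one_add_sq_pow_div_sq_le_one {n : ℕ} (hn : n ≠ 0) {u : ℝ} (hu : u ∈ Ioc 0 1) :
    log (1 + u ^ 2) ^ n / u ^ 2 ≤ 1 := by
  obtain ⟨hu0, hu1⟩ := hu
  have hlog : log (1 + u ^ 2) ≤ u ^ 2 := by
    linarith [log_le_sub_one_of_pos (show 0 < 1 + u ^ 2 by positivity)]
  have hlog0 : 0 ≤ log (1 + u ^ 2) := log_nonneg (by nlinarith)
  rw [div_le_one (by positivity)]
  calc log (1 + u ^ 2) ^ n ≤ log (1 + u ^ 2) :=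
        pow_le_of_le_one hlog0 (hlog.trans (by nlinarith)) hn
    _ ≤ u ^ 2 := hlog

lemma log_one_add_sq_pow_div_sq_le_rpow (n : ℕ) {u : ℝ} (hu : 1 ≤ u) :
    log (1 + u ^ 2) ^ n / u ^ 2 ≤ 2 * (4 * n) ^ n * (1 + u ^ 2) ^ (-3 / 4 : ℝ) := by
  have hx : 0 < 1 + u ^ 2 := by positivity
  have hpow := pow_log_le_mul_rpow n (show 1 ≤ 1 + u ^ 2 by nlinarith)
    (show (0 : ℝ) < 1 / 4 by norm_num)
  rw [div_div_eq_mul_div, div_one, mul_comm (n : ℝ)] at hpow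
  have hsq : (1 + u ^ 2) ^ (-3 / 4 : ℝ) = (1 + u ^ 2) ^ (1 / 4 : ℝ) / (1 + u ^ 2) := by
    rw [← rpow_sub_one hx.ne']; norm_num
  rw [hsq, div_le_iff₀ (by positivity)]
  calc log (1 + u ^ 2) ^ n ≤ (4 * n) ^ n * (1 + u ^ 2) ^ (1 / 4 : ℝ) := hpow
    _ ≤ 2 * (4 * n) ^ n * ((1 + u ^ 2) ^ (1 / 4 : ℝ) / (1 + u ^ 2)) * u ^ 2 := by
        rw [show 2 * (4 * n) ^ n * ((1 + u ^ 2) ^ (1 / 4 : ℝ) / (1 + u ^ 2)) * u ^ 2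
          = (4 * n) ^ n * (1 + u ^ 2) ^ (1 / 4 : ℝ) * (2 * u ^ 2 / (1 + u ^ 2)) by ring]
        exact le_mul_of_one_le_right (by positivity) ((one_le_div hx).2 (by nlinarith))

theorem integrableOn_log_one_add_sq_pow_div_sq {n : ℕ} (hn : n ≠ 0) :
    IntegrableOn (fun u : ℝ => log (1 + u ^ 2) ^ n / u ^ 2) (Ioi 0) := by
  have hmeas : Measurable fun u : ℝ => log (1 + u ^ 2) ^ n / u ^ 2 := by fun_prop
  have hnear : IntegrableOn (fun u : ℝ => log (1 + u ^ 2) ^ n / u ^ 2) (Ioc 0 1) := by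
    refine Measure.integrableOn_of_bounded (M := 1) measure_Ioc_lt_top.ne
      hmeas.aestronglyMeasurable ?_
    refine (ae_restrict_iff' measurableSet_Ioc).2 (ae_of_all _ fun u hu => ?_)
    rw [norm_of_nonneg (div_nonneg (pow_nonneg (log_nonneg (by nlinarith)) n) (sq_nonneg u))]
    exact log_one_add_sq_pow_div_sq_le_one hn hu
  have hfar : IntegrableOn (fun u : ℝ => log (1 + u ^ 2) ^ n / u ^ 2) (Ioi 1) := by
    have hdom : Integrable fun u : ℝ => 2 * (4 * n) ^ n * (1 + u ^ 2) ^ (-3 / 4 : ℝ) := by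
      have := integrable_rpow_neg_one_add_norm_sq (E := ℝ) (μ := volume) (r := 3 / 2) (by norm_num)
      simp only [norm_eq_abs, sq_abs] at this
      exact (this.const_mul (2 * (4 * n) ^ n)).congr (ae_of_all _ fun u => by norm_num)
    refine hdom.integrableOn.mono' hmeas.aestronglyMeasurable ?_
    refine (ae_restrict_iff' measurableSet_Ioi).2 (ae_of_all _ fun u (hu : 1 < u) => ?_)
    rw [norm_of_nonneg (div_nonneg (pow_nonneg (log_nonneg (by nlinarith)) n) (sq_nonneg u))]
    exact log_one_add_sq_pow_div_sq_le_rpow n hu.le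
  simpa only [Ioc_union_Ioi_eq_Ioi zero_le_one] using hnear.union hfar

lemma abs_log_le_two_mul_one_sub {y : ℝ} (hy : 1 / 2 ≤ y) (hy1 : y ≤ 1) :
    |log y| ≤ 2 * (1 - y) := by
  have hy0 : 0 < y := by linarith
  rw [abs_of_nonpos (log_nonpos hy0.le hy1)]
  have hinv : y⁻¹ - 1 ≤ 2 * (1 - y) := by
    rw [inv_eq_one_div, div_sub_one hy0.ne', div_le_iff₀ hy0]
    nlinarith
  linarith [one_sub_inv_le_log_of_pos hy0]

noncomputable def scaledIntegrand (n : ℕ) (f u : ℝ) : ℝ := log (1 - f + u ^ 2) ^ n / (f + u ^ 2)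

lemma scaledIntegrand_zero (n : ℕ) :
    scaledIntegrand n 0 = fun u => log (1 + u ^ 2) ^ n / u ^ 2 := by
  ext u
  simp [scaledIntegrand]

lemma measurable_scaledIntegrand (n : ℕ) (f : ℝ) : Measurable (scaledIntegrand n f) := by
  unfold scaledIntegrand; fun_prop

lemma continuousAt_scaledIntegrand_zero (n : ℕ) {u : ℝ} (hu : u ≠ 0) :
    ContinuousAt (fun f => scaledIntegrand n f u) 0 := by
  have hlog : ContinuousAt (fun f : ℝ => log (1 - f + u ^ 2)) 0 :=
    (continuousAt_log (by positivity)).comp (by fun_prop)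
  exact (hlog.pow n).div (by fun_prop) (by simpa using hu)

lemma abs_scaledIntegrand_le_of_sq_lt {n : ℕ} (hn : n ≠ 0) {f u : ℝ} (hf : f ≤ 1 / 2)
    (hu : u ^ 2 < f) : |scaledIntegrand n f u| ≤ 2 ^ n := by
  have hf0 : 0 < f := (sq_nonneg u).trans_lt hu
  have hlog : |log (1 - f + u ^ 2)| ≤ 2 * f := by
    have := abs_log_le_two_mul_one_sub (y := 1 - f + u ^ 2) (by nlinarith) (by linarith)
    nlinarith
  rw [scaledIntegrand, abs_div, abs_pow, abs_of_pos (by positivity : 0 < f + u ^ 2),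
    div_le_iff₀ (by positivity)]
  calc |log (1 - f + u ^ 2)| ^ n ≤ (2 * f) ^ n := by gcongr
    _ = 2 ^ n * f ^ n := mul_pow 2 f n
    _ ≤ 2 ^ n * (f + u ^ 2) := by
        gcongr
        exact (pow_le_of_le_one hf0.le (by linarith) hn).trans (by nlinarith)

lemma abs_scaledIntegrand_le_of_le_sq (n : ℕ) {f u : ℝ} (hf0 : 0 ≤ f)
    (hu0 : 0 < u) (hu : f ≤ u ^ 2) : |scaledIntegrand n f u| ≤ scaledIntegrand n 0 u := by
  have hlog0 : 0 ≤ log (1 - f + u ^ 2) := log_nonneg (by linarith)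
  have hlog : log (1 - f + u ^ 2) ≤ log (1 + u ^ 2) := log_le_log (by linarith) (by linarith)
  rw [scaledIntegrand_zero, scaledIntegrand, abs_of_nonneg (by positivity)]
  exact div_le_div₀ (pow_nonneg (hlog0.trans hlog) n) (by gcongr) (by positivity) (by linarith)

lemma abs_scaledIntegrand_le {n : ℕ} (hn : n ≠ 0) {f u : ℝ} (hf : f ∈ Ioc 0 (1 / 2))
    (hu : 0 < u) :
    |scaledIntegrand n f u| ≤ (Ioc 0 1).indicator (fun _ => 2 ^ n) u + scaledIntegrand n 0 u := by
  obtain ⟨hf0, hf1⟩ := hf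
  have hI : 0 ≤ (Ioc 0 1).indicator (fun _ => (2 : ℝ) ^ n) u :=
    indicator_nonneg (fun _ _ => by positivity) u
  have hS : 0 ≤ scaledIntegrand n 0 u := by
    rw [scaledIntegrand_zero]
    have := log_nonneg (show 1 ≤ 1 + u ^ 2 by nlinarith)
    positivity
  rcases lt_or_ge (u ^ 2) f with hu2 | hu2
  · rw [indicator_of_mem (show u ∈ Ioc 0 1 from ⟨hu, by nlinarith⟩)]
    linarith [abs_scaledIntegrand_le_of_sq_lt hn hf1 hu2]
  · linarith [abs_scaledIntegrand_le_of_le_sq n hf0.le hu hu2]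

theorem tendsto_integral_scaledIntegrand {n : ℕ} (hn : n ≠ 0) :
    Tendsto (fun f => ∫ u in Ioi 0, scaledIntegrand n f u) (𝓝[>] 0)
      (𝓝 (∫ u in Ioi 0, scaledIntegrand n 0 u)) := by
  refine tendsto_integral_filter_of_dominated_convergence
    (fun u => (Ioc 0 1).indicator (fun _ => (2 : ℝ) ^ n) u + scaledIntegrand n 0 u)
    (Eventually.of_forall fun f => (measurable_scaledIntegrand n f).aestronglyMeasurable) ?_ ?_ ?_
  · filter_upwards [Ioc_mem_nhdsGT (show (0 : ℝ) < 1 / 2 by norm_num)] with f hf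
    refine (ae_restrict_iff' measurableSet_Ioi).2 (ae_of_all _ fun u hu => ?_)
    exact abs_scaledIntegrand_le hn hf hu
  · have hlim : IntegrableOn (scaledIntegrand n 0) (Ioi 0) := by
      rw [scaledIntegrand_zero]
      exact integrableOn_log_one_add_sq_pow_div_sq hn
    refine Integrable.add ?_ hlim
    exact ((integrable_indicator_iff measurableSet_Ioc).2
      (integrableOn_const measure_Ioc_lt_top.ne)).integrableOn
  · refine (ae_restrict_iff' measurableSet_Ioi).2 (ae_of_all _ fun u (hu : 0 < u) => ?_)
    exact (continuousAt_scaledIntegrand_zero n hu.ne').tendsto.mono_left nhdsWithin_le_nhds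

lemma integral_log_div_one_add_sq_div_sqrt (n : ℕ) {f : ℝ} (hf : 0 < f) :
    (∫ x in Ioi 0, log ((1 - f) + f * x ^ 2) ^ n / (1 + x ^ 2)) / √f
      = ∫ u in Ioi 0, scaledIntegrand n f u := by
  have hs : 0 < √f := sqrt_pos.2 hf
  have hcomp (x : ℝ) :
      log ((1 - f) + f * x ^ 2) ^ n / (1 + x ^ 2) = f * scaledIntegrand n f (√f * x) := by
    rw [scaledIntegrand, mul_pow, sq_sqrt hf.le, show f + f * x ^ 2 = f * (1 + x ^ 2) by ring,
      mul_div_assoc', mul_div_mul_left _ _ hf.ne']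
  simp_rw [hcomp]
  rw [integral_const_mul]
  have := integral_comp_mul_left_Ioi (scaledIntegrand n f) 0 hs
  rw [mul_zero, smul_eq_mul] at this
  rw [this]
  field_simp
  rw [sq_sqrt hf.le]

/-- for every integer `n ≥ 1`, the integral
`I_n = ∫₀^∞ (log(1+u²))ⁿ / u² du` is finite, and
`f^{-1/2} ∫₀^∞ (log((1-f) + f x²))ⁿ / (1+x²) dx → I_n` as `f → 0+`. -/
theorem squared_cauchy_scaling_limit (n : ℕ) (hn : 1 ≤ n) :
    IntegrableOn (fun u => (Real.log (1 + u ^ 2)) ^ n / u ^ 2) (Set.Ioi (0 : ℝ))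
    ∧ Tendsto
        (fun f : ℝ =>
          (∫ x in Set.Ioi (0 : ℝ), (Real.log ((1 - f) + f * x ^ 2)) ^ n / (1 + x ^ 2))
            / Real.sqrt f)
        (𝓝[>] (0 : ℝ))
        (𝓝 (∫ u in Set.Ioi (0 : ℝ), (Real.log (1 + u ^ 2)) ^ n / u ^ 2)) := by
  have hn0 : n ≠ 0 := Nat.one_le_iff_ne_zero.mp hn
  refine ⟨integrableOn_log_one_add_sq_pow_div_sq hn0, ?_⟩
  rw [← scaledIntegrand_zero]
  refine (tendsto_integral_scaledIntegrand hn0).congr' ?_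
  filter_upwards [self_mem_nhdsWithin] with f hf
  exact (integral_log_div_one_add_sq_div_sqrt n hf).symm
end

section
/- Let ξ be an ℝᵐ-valued random vector with E[ξ] = 0, covariance matrix Q, E[‖ξ‖³] < ∞, and each component ξ⁽ˡ⁾ ≥ −c almost surely for some constant c > 0. Let μ ∈ ℝᵐ and let K be a compact subset of the simplex {f ∈ ℝᵐ : f⁽ˡ⁾ ≥ 0, Σ_ℓ f⁽ˡ⁾ ≤ 1}. Then there exist C > 0 and N such that for all n ≥ N and all f ∈ K: |n·E[ln(1 + f·μ/n + f·ξ/√n)] − (f·μ − (1/2)·f·Qf)| ≤ C·n^{−1/2} and |n·Var[ln(1 + f·μ/n + f·ξ/√n)] − f·Qf| ≤ C·n^{−1/2}. -/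
/-!
Write `t = f·μ/n + f·ξ/√n`, so that the log wealth increment is `log (1 + t)`. For `n` large the
bound `ξ ≥ -c` and the simplex constraint give `t ≥ -1/2`, and on `[-1/2, ∞)` the mean value
theorem bounds the Taylor remainders of `log (1 + t)`: it is within `2|t|³` of `t - t²/2`,
within `2t²` of `t`, and at most `2|t|` in size; hence `log (1 + t)²` is within `6|t|³` of `t²`.
Now `E t = f·μ/n` and `E t² = (f·μ)²/n² + f·Qf/n` exactly, `(E log (1 + t))² = O(n⁻²)`, and
`|t| ≤ (‖μ‖ + ‖ξ‖)/√n` makes `E|t|³ = O(n^{-3/2})` uniformly on the simplex, so both expansions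
hold with a constant depending only on `‖μ‖` and the second and third moments of `‖ξ‖`.
-/

open MeasureTheory ProbabilityTheory Real

open Finset Set in
theorem Real.abs_log_sub_add_sum_range_le_of_le_half {x : ℝ} (hx : x ≤ 1 / 2) (n : ℕ) :
    |(∑ i ∈ range n, x ^ (i + 1) / (i + 1)) + log (1 - x)| ≤ 2 * |x| ^ (n + 1) := by
  let F : ℝ → ℝ := fun y => (∑ i ∈ range n, y ^ (i + 1) / (i + 1)) + log (1 - y)
  have hle : ∀ y ∈ uIcc 0 x, y ≤ 1 / 2 := fun y hy ↦ by
    rcases Set.mem_uIcc.1 hy with h | h <;> linarith [h.1, h.2]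
  have hderiv : ∀ y ∈ uIcc 0 x, HasDerivAt F (-y ^ n / (1 - y)) y := fun y hy ↦ by
    have hy1 : y < 1 := by linarith [hle y hy]
    have : HasDerivAt F ((∑ i ∈ range n, ↑(i + 1) * y ^ i / (↑i + 1)) + (-1) / (1 - y)) y :=
      .add (.fun_sum fun i _ ↦ (hasDerivAt_pow (i + 1) y).div_const ((i : ℝ) + 1))
        (((hasDerivAt_id y).const_sub _).log <| sub_ne_zero.2 hy1.ne')
    convert this using 1
    calc -y ^ n / (1 - y) = ∑ i ∈ range n, y ^ i + -1 / (1 - y) := by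
          rw [geom_sum_eq hy1.ne]
          field_simp [sub_ne_zero.2 hy1.ne, sub_ne_zero.2 hy1.ne']
          ring
      _ = ∑ i ∈ range n, ↑(i + 1) * y ^ i / (↑i + 1) + -1 / (1 - y) := by
          congr with i
          rw [Nat.cast_succ, mul_div_cancel_left₀ _ (Nat.cast_add_one_pos i).ne']
  have hbound : ∀ y ∈ uIcc 0 x, ‖-y ^ n / (1 - y)‖ ≤ 2 * |x| ^ n := fun y hy ↦ by
    have hyx : |y| ≤ |x| := by simpa using abs_sub_left_of_mem_uIcc hy
    have hy2 : 1 / 2 ≤ 1 - y := by linarith [hle y hy]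
    calc ‖-y ^ n / (1 - y)‖ = |y| ^ n / (1 - y) := by
          simp only [norm_div, norm_neg, norm_pow, Real.norm_eq_abs]
          rw [abs_of_pos (by linarith : (0 : ℝ) < 1 - y)]
      _ ≤ |x| ^ n / (1 / 2) := by gcongr
      _ = 2 * |x| ^ n := by ring
  have := Convex.norm_image_sub_le_of_norm_hasDerivWithin_le
    (fun y hy ↦ (hderiv y hy).hasDerivWithinAt) hbound (convex_uIcc 0 x) left_mem_uIcc
    right_mem_uIcc
  simpa [F, pow_succ, mul_assoc] using this

lemma Real.abs_log_one_add_le {t : ℝ} (h : -(1 / 2) ≤ t) : |log (1 + t)| ≤ 2 * |t| := by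
  simpa using abs_log_sub_add_sum_range_le_of_le_half (x := -t) (by linarith) 0

lemma Real.abs_log_one_add_sub_self_le {t : ℝ} (h : -(1 / 2) ≤ t) :
    |log (1 + t) - t| ≤ 2 * t ^ 2 := by
  rw [← neg_add_eq_sub]
  simpa using abs_log_sub_add_sum_range_le_of_le_half (x := -t) (by linarith) 1

lemma Real.abs_log_one_add_sub_taylor_le {t : ℝ} (h : -(1 / 2) ≤ t) :
    |log (1 + t) - (t - t ^ 2 / 2)| ≤ 2 * |t| ^ 3 := by
  rw [show log (1 + t) - (t - t ^ 2 / 2) = -t + t ^ 2 / 2 + log (1 + t) by ring]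
  simpa [Finset.sum_range_succ, one_add_one_eq_two] using
    abs_log_sub_add_sum_range_le_of_le_half (x := -t) (by linarith) 2

lemma neg_half_le_div_sq_add_div {a s c r : ℝ} (hr : 1 ≤ r) (hrc : 2 * (|a| + c) ≤ r)
    (hs : -c ≤ s) : -(1 / 2) ≤ a / r ^ 2 + s / r := by
  have hr0 : 0 < r := by linarith
  have ha : -(|a| / r) ≤ a / r ^ 2 := by
    have : |a| / r ^ 2 ≤ |a| / r := by gcongr; nlinarith
    have := neg_abs_le (a / r ^ 2)
    rw [abs_div, abs_of_pos (by positivity : 0 < r ^ 2)] at this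
    linarith
  have hcs : -c / r ≤ s / r := by gcongr
  have : (|a| + c) / r ≤ 1 / 2 := by rw [div_le_iff₀ hr0]; linarith
  rw [add_div] at this
  rw [neg_div] at hcs
  linarith

lemma abs_div_sq_add_div_le {a s r : ℝ} (hr : 1 ≤ r) : |a / r ^ 2 + s / r| ≤ (|a| + |s|) / r := by
  have hr0 : 0 < r := by linarith
  calc |a / r ^ 2 + s / r| ≤ |a| / r ^ 2 + |s| / r := by
        refine (abs_add_le _ _).trans_eq ?_
        rw [abs_div, abs_div, abs_of_pos hr0, abs_of_pos (by positivity : 0 < r ^ 2)]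
    _ ≤ |a| / r + |s| / r := by gcongr; nlinarith
    _ = (|a| + |s|) / r := by ring

section Expansion

variable {Ω : Type*} [MeasurableSpace Ω] {P : Measure Ω}

lemma abs_integral_sub_le_of_abs_sub_le {X Y B : Ω → ℝ} (hX : Integrable X P)
    (hY : Integrable Y P) (hB : Integrable B P) (h : ∀ᵐ ω ∂P, |X ω - Y ω| ≤ B ω) :
    |∫ ω, X ω ∂P - ∫ ω, Y ω ∂P| ≤ ∫ ω, B ω ∂P := by
  rw [← integral_sub hX hY]
  exact norm_integral_le_of_norm_le (f := fun ω => X ω - Y ω) hB h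

lemma pow_mul_integral_abs_pow_le {t G : Ω → ℝ} {r : ℝ} (k : ℕ) (hr : 0 ≤ r)
    (ht : Integrable (fun ω => |t ω| ^ k) P) (hG : Integrable (fun ω => G ω ^ k) P)
    (h : ∀ ω, r * |t ω| ≤ G ω) : r ^ k * ∫ ω, |t ω| ^ k ∂P ≤ ∫ ω, G ω ^ k ∂P := by
  rw [← integral_const_mul]
  refine integral_mono (ht.const_mul _) hG fun ω => ?_
  rw [← mul_pow]
  exact pow_le_pow_left₀ (by positivity) (h ω) k

variable [IsProbabilityMeasure P] {S t : Ω → ℝ} {a q r : ℝ}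

lemma integral_const_add_div (hS : Integrable S P) (hS0 : ∫ ω, S ω ∂P = 0) (α β : ℝ) :
    ∫ ω, (α + S ω / β) ∂P = α := by
  rw [integral_add (integrable_const α) (hS.div_const β), integral_div, hS0]
  simp

lemma integral_const_add_div_sq (hS : MemLp S 2 P) (hS0 : ∫ ω, S ω ∂P = 0) (α β : ℝ) :
    ∫ ω, (α + S ω / β) ^ 2 ∂P = α ^ 2 + (∫ ω, S ω ^ 2 ∂P) / β ^ 2 := by
  have hS1 : Integrable S P := hS.integrable one_le_two
  have hexp : ∀ ω, (α + S ω / β) ^ 2 = (α ^ 2 + (2 * α / β) * S ω) + S ω ^ 2 / β ^ 2 :=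
    fun ω => by ring
  have hlin : Integrable (fun ω => α ^ 2 + (2 * α / β) * S ω) P :=
    (integrable_const _).add (hS1.const_mul _)
  simp_rw [hexp]
  rw [integral_add hlin (hS.integrable_sq.div_const _),
    integral_add (integrable_const _) (hS1.const_mul _), integral_const_mul, integral_div, hS0]
  simp

lemma memLp_two_log_one_add (ht : ∀ᵐ ω ∂P, -(1 / 2) ≤ t ω) (ht3 : MemLp t 3 P) :
    MemLp (fun ω => log (1 + t ω)) 2 P := by
  refine (ht3.mono_exponent (by norm_num)).of_le_mul (c := 2) ?_ ?_
  · exact (measurable_log.comp_aemeasurable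
      (ht3.aestronglyMeasurable.aemeasurable.const_add 1)).aestronglyMeasurable
  · filter_upwards [ht] with ω hω
    simpa using Real.abs_log_one_add_le hω

lemma integrable_abs_pow_three (ht3 : MemLp t 3 P) : Integrable (fun ω => |t ω| ^ 3) P :=
  ht3.integrable_norm_pow' (p := 3)

lemma abs_integral_log_one_add_sub_le (ht : ∀ᵐ ω ∂P, -(1 / 2) ≤ t ω) (ht3 : MemLp t 3 P) :
    |∫ ω, log (1 + t ω) ∂P - ∫ ω, t ω ∂P| ≤ 2 * ∫ ω, t ω ^ 2 ∂P := by
  rw [← integral_const_mul]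
  refine abs_integral_sub_le_of_abs_sub_le ((memLp_two_log_one_add ht ht3).integrable one_le_two)
    (ht3.integrable (by norm_num))
    ((ht3.mono_exponent (by norm_num)).integrable_sq.const_mul 2) ?_
  filter_upwards [ht] with ω hω
  exact Real.abs_log_one_add_sub_self_le hω

lemma abs_integral_log_one_add_sub_taylor_le (ht : ∀ᵐ ω ∂P, -(1 / 2) ≤ t ω)
    (ht3 : MemLp t 3 P) :
    |∫ ω, log (1 + t ω) ∂P - (∫ ω, t ω ∂P - (∫ ω, t ω ^ 2 ∂P) / 2)|
      ≤ 2 * ∫ ω, |t ω| ^ 3 ∂P := by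
  have ht2 : Integrable (fun ω => t ω ^ 2) P := (ht3.mono_exponent (by norm_num)).integrable_sq
  have ht1 : Integrable t P := ht3.integrable (by norm_num)
  rw [← integral_div, ← integral_sub ht1 (ht2.div_const 2), ← integral_const_mul]
  refine abs_integral_sub_le_of_abs_sub_le ((memLp_two_log_one_add ht ht3).integrable one_le_two)
    (ht1.sub (ht2.div_const 2)) ((integrable_abs_pow_three ht3).const_mul 2) ?_
  filter_upwards [ht] with ω hω
  exact Real.abs_log_one_add_sub_taylor_le hω

lemma abs_integral_log_one_add_sq_sub_le (ht : ∀ᵐ ω ∂P, -(1 / 2) ≤ t ω) (ht3 : MemLp t 3 P) :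
    |∫ ω, log (1 + t ω) ^ 2 ∂P - ∫ ω, t ω ^ 2 ∂P| ≤ 6 * ∫ ω, |t ω| ^ 3 ∂P := by
  rw [← integral_const_mul]
  refine abs_integral_sub_le_of_abs_sub_le (memLp_two_log_one_add ht ht3).integrable_sq
    (ht3.mono_exponent (by norm_num)).integrable_sq
    ((integrable_abs_pow_three ht3).const_mul 6) ?_
  filter_upwards [ht] with ω hω
  have h1 := Real.abs_log_one_add_le hω
  have h2 := Real.abs_log_one_add_sub_self_le hω
  calc |log (1 + t ω) ^ 2 - t ω ^ 2| = |log (1 + t ω) - t ω| * |log (1 + t ω) + t ω| := by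
        rw [← abs_mul]; ring_nf
    _ ≤ 2 * t ω ^ 2 * (3 * |t ω|) := by
        gcongr
        exact (abs_add_le _ _).trans (by linarith)
    _ = 6 * |t ω| ^ 3 := by rw [← sq_abs (t ω)]; ring

lemma abs_sq_mul_integral_log_one_add_sub_le (ht : ∀ᵐ ω ∂P, -(1 / 2) ≤ t ω)
    (ht3 : MemLp t 3 P) (hr : 0 < r) (ht1 : ∫ ω, t ω ∂P = a / r ^ 2)
    (ht2 : ∫ ω, t ω ^ 2 ∂P = (a / r ^ 2) ^ 2 + q / r ^ 2) :
    |r ^ 2 * ∫ ω, log (1 + t ω) ∂P - (a - 1 / 2 * q)|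
      ≤ 2 * r ^ 2 * ∫ ω, |t ω| ^ 3 ∂P + a ^ 2 / (2 * r ^ 2) := by
  have htaylor := abs_integral_log_one_add_sub_taylor_le ht ht3
  rw [ht1, ht2] at htaylor
  have hsplit : r ^ 2 * ∫ ω, log (1 + t ω) ∂P - (a - 1 / 2 * q)
      = r ^ 2 * (∫ ω, log (1 + t ω) ∂P - (a / r ^ 2 - ((a / r ^ 2) ^ 2 + q / r ^ 2) / 2))
        - a ^ 2 / (2 * r ^ 2) := by
    field_simp; ring
  rw [hsplit]
  refine (abs_sub _ _).trans ?_
  rw [abs_mul, abs_of_pos (by positivity : 0 < r ^ 2),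
    abs_of_nonneg (by positivity : 0 ≤ a ^ 2 / (2 * r ^ 2))]
  linarith [mul_le_mul_of_nonneg_left htaylor (sq_nonneg r)]

lemma abs_sq_mul_integral_log_one_add_le (ht : ∀ᵐ ω ∂P, -(1 / 2) ≤ t ω) (ht3 : MemLp t 3 P)
    (hr : 0 < r) (ht1 : ∫ ω, t ω ∂P = a / r ^ 2) :
    |r ^ 2 * ∫ ω, log (1 + t ω) ∂P| ≤ |a| + 2 * r ^ 2 * ∫ ω, t ω ^ 2 ∂P := by
  have h := abs_integral_log_one_add_sub_le ht ht3
  rw [ht1] at h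
  have hsplit : r ^ 2 * ∫ ω, log (1 + t ω) ∂P
      = a + r ^ 2 * (∫ ω, log (1 + t ω) ∂P - a / r ^ 2) := by
    field_simp; ring
  rw [hsplit]
  refine (abs_add_le _ _).trans ?_
  rw [abs_mul, abs_of_pos (by positivity : 0 < r ^ 2)]
  linarith [mul_le_mul_of_nonneg_left h (sq_nonneg r)]

lemma abs_sq_mul_variance_log_one_add_sub_le (ht : ∀ᵐ ω ∂P, -(1 / 2) ≤ t ω)
    (ht3 : MemLp t 3 P) (hr : 0 < r) (ht1 : ∫ ω, t ω ∂P = a / r ^ 2)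
    (ht2 : ∫ ω, t ω ^ 2 ∂P = (a / r ^ 2) ^ 2 + q / r ^ 2) :
    |r ^ 2 * variance (fun ω => log (1 + t ω)) P - q|
      ≤ 6 * r ^ 2 * ∫ ω, |t ω| ^ 3 ∂P + a ^ 2 / r ^ 2
        + (|a| + 2 * r ^ 2 * ∫ ω, t ω ^ 2 ∂P) ^ 2 / r ^ 2 := by
  set E := ∫ ω, log (1 + t ω) ∂P
  have hr2 : 0 < r ^ 2 := by positivity
  have hmean := abs_sq_mul_integral_log_one_add_le ht ht3 hr ht1
  have hmean2 : (r ^ 2 * E) ^ 2 / r ^ 2 ≤ (|a| + 2 * r ^ 2 * ∫ ω, t ω ^ 2 ∂P) ^ 2 / r ^ 2 :=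
    div_le_div_of_nonneg_right (sq_le_sq' (abs_le.1 hmean).1 (abs_le.1 hmean).2) hr2.le
  rw [variance_eq_sub (memLp_two_log_one_add ht ht3)]
  have hsplit : r ^ 2 * (∫ ω, ((fun ω => log (1 + t ω)) ^ 2) ω ∂P - E ^ 2) - q
      = r ^ 2 * (∫ ω, log (1 + t ω) ^ 2 ∂P - ∫ ω, t ω ^ 2 ∂P) + a ^ 2 / r ^ 2
        - (r ^ 2 * E) ^ 2 / r ^ 2 := by
    simp only [Pi.pow_apply]
    rw [ht2]
    field_simp
    ring
  rw [hsplit]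
  refine (abs_sub _ _).trans ?_
  rw [abs_of_nonneg (by positivity : 0 ≤ (r ^ 2 * E) ^ 2 / r ^ 2)]
  refine add_le_add ((abs_add_le _ _).trans ?_) hmean2
  rw [abs_mul, abs_of_pos hr2, abs_of_nonneg (by positivity : 0 ≤ a ^ 2 / r ^ 2)]
  linarith [mul_le_mul_of_nonneg_left (abs_integral_log_one_add_sq_sub_le ht ht3) hr2.le]

lemma abs_sq_mul_moments_log_one_add_sub_le {G : Ω → ℝ} {A : ℝ}
    (ht : ∀ᵐ ω ∂P, -(1 / 2) ≤ t ω) (ht3 : MemLp t 3 P) (hr : 1 ≤ r)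
    (ht1 : ∫ ω, t ω ∂P = a / r ^ 2) (ht2 : ∫ ω, t ω ^ 2 ∂P = (a / r ^ 2) ^ 2 + q / r ^ 2)
    (hG : MemLp G 3 P) (ha : |a| ≤ A) (htG : ∀ ω, r * |t ω| ≤ G ω) :
    |r ^ 2 * ∫ ω, log (1 + t ω) ∂P - (a - 1 / 2 * q)|
        ≤ (6 * ∫ ω, G ω ^ 3 ∂P + A ^ 2 + (A + 2 * ∫ ω, G ω ^ 2 ∂P) ^ 2) / r
      ∧ |r ^ 2 * variance (fun ω => log (1 + t ω)) P - q|
        ≤ (6 * ∫ ω, G ω ^ 3 ∂P + A ^ 2 + (A + 2 * ∫ ω, G ω ^ 2 ∂P) ^ 2) / r := by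
  have hr0 : 0 < r := by linarith
  have hG0 : ∀ ω, 0 ≤ G ω := fun ω => (by positivity : 0 ≤ r * |t ω|).trans (htG ω)
  have hM3 : r ^ 3 * ∫ ω, |t ω| ^ 3 ∂P ≤ ∫ ω, G ω ^ 3 ∂P := by
    refine pow_mul_integral_abs_pow_le 3 hr0.le (integrable_abs_pow_three ht3) ?_ htG
    simpa [abs_of_nonneg (hG0 _)] using integrable_abs_pow_three hG
  have hM2 : r ^ 2 * ∫ ω, t ω ^ 2 ∂P ≤ ∫ ω, G ω ^ 2 ∂P := by
    simp_rw [← sq_abs (t _)]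
    exact pow_mul_integral_abs_pow_le 2 hr0.le
      (by simpa using (ht3.mono_exponent (by norm_num)).integrable_sq)
      (hG.mono_exponent (by norm_num)).integrable_sq htG
  have hrr : r ≤ r ^ 2 := by nlinarith
  have hcube : r ^ 2 * ∫ ω, |t ω| ^ 3 ∂P ≤ (∫ ω, G ω ^ 3 ∂P) / r := by
    rw [le_div_iff₀ hr0]
    linarith [show r ^ 2 * (∫ ω, |t ω| ^ 3 ∂P) * r = r ^ 3 * ∫ ω, |t ω| ^ 3 ∂P by ring]
  have ha2 : a ^ 2 / r ^ 2 ≤ A ^ 2 / r :=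
    div_le_div₀ (sq_nonneg A) (sq_abs a ▸ pow_le_pow_left₀ (abs_nonneg a) ha 2) hr0 hrr
  have hmoment : (|a| + 2 * r ^ 2 * ∫ ω, t ω ^ 2 ∂P) ^ 2 / r ^ 2
      ≤ (A + 2 * ∫ ω, G ω ^ 2 ∂P) ^ 2 / r := by
    have h0 : 0 ≤ ∫ ω, t ω ^ 2 ∂P := integral_nonneg fun ω => sq_nonneg _
    exact div_le_div₀ (sq_nonneg _) (pow_le_pow_left₀ (by positivity) (by linarith) 2) hr0 hrr
  have hG3 : 0 ≤ (∫ ω, G ω ^ 3 ∂P) / r :=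
    div_nonneg (integral_nonneg fun ω => pow_nonneg (hG0 ω) 3) hr0.le
  have hsq : 0 ≤ (A + 2 * ∫ ω, G ω ^ 2 ∂P) ^ 2 / r := by positivity
  rw [add_div, add_div, mul_div_assoc]
  constructor
  · refine (abs_sq_mul_integral_log_one_add_sub_le ht ht3 hr0 ht1 ht2).trans ?_
    have : a ^ 2 / (2 * r ^ 2) ≤ a ^ 2 / r ^ 2 := by gcongr; linarith
    linarith
  · refine (abs_sq_mul_variance_log_one_add_sub_le ht ht3 hr0 ht1 ht2).trans ?_
    linarith

theorem log_one_add_mean_variance_expansion {G : Ω → ℝ} {A c : ℝ} (hS : MemLp S 3 P)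
    (hS0 : ∫ ω, S ω ∂P = 0) (hSq : ∫ ω, S ω ^ 2 ∂P = q) (hSc : ∀ᵐ ω ∂P, -c ≤ S ω)
    (hG : MemLp G 3 P) (ha : |a| ≤ A) (hSG : ∀ ω, A + |S ω| ≤ G ω) (hr : 1 ≤ r)
    (hrc : 2 * (A + c) ≤ r) :
    |r ^ 2 * ∫ ω, log (1 + a / r ^ 2 + S ω / r) ∂P - (a - 1 / 2 * q)|
        ≤ (6 * ∫ ω, G ω ^ 3 ∂P + A ^ 2 + (A + 2 * ∫ ω, G ω ^ 2 ∂P) ^ 2) / r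
      ∧ |r ^ 2 * variance (fun ω => log (1 + a / r ^ 2 + S ω / r)) P - q|
        ≤ (6 * ∫ ω, G ω ^ 3 ∂P + A ^ 2 + (A + 2 * ∫ ω, G ω ^ 2 ∂P) ^ 2) / r := by
  set t : Ω → ℝ := fun ω => a / r ^ 2 + S ω / r
  simp only [add_assoc 1 (a / r ^ 2)]
  refine abs_sq_mul_moments_log_one_add_sub_le (t := t) ?_ ?_ hr ?_ ?_ hG ha fun ω => ?_
  · filter_upwards [hSc] with ω hω using neg_half_le_div_sq_add_div hr (by linarith) hω
  · have hSr : MemLp (fun ω => S ω / r) 3 P := by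
      simpa only [div_eq_mul_inv] using hS.mul_const r⁻¹
    exact (memLp_const (a / r ^ 2)).add hSr
  · exact integral_const_add_div (hS.integrable (by norm_num)) hS0 _ _
  · rw [← hSq]; exact integral_const_add_div_sq (hS.mono_exponent (by norm_num)) hS0 _ _
  · have := abs_div_sq_add_div_le (a := a) (s := S ω) hr
    rw [le_div_iff₀ (by linarith)] at this
    linarith [hSG ω]

end Expansion

section Portfolio

variable {ι : Type*} [Fintype ι]

lemma abs_sum_mul_le_norm {f : ι → ℝ} (hf0 : ∀ i, 0 ≤ f i) (hf1 : ∑ i, f i ≤ 1) (x : ι → ℝ) :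
    |∑ i, f i * x i| ≤ ‖x‖ :=
  calc |∑ i, f i * x i| ≤ ∑ i, f i * ‖x‖ := by
        refine (Finset.abs_sum_le_sum_abs _ _).trans (Finset.sum_le_sum fun i _ => ?_)
        rw [abs_mul, abs_of_nonneg (hf0 i)]
        exact mul_le_mul_of_nonneg_left (norm_le_pi_norm x i) (hf0 i)
    _ = (∑ i, f i) * ‖x‖ := by rw [Finset.sum_mul]
    _ ≤ ‖x‖ := mul_le_of_le_one_left (norm_nonneg x) hf1

lemma neg_le_sum_mul {f : ι → ℝ} (hf0 : ∀ i, 0 ≤ f i) (hf1 : ∑ i, f i ≤ 1) {c : ℝ}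
    (hc : 0 ≤ c) {x : ι → ℝ} (hx : ∀ i, -c ≤ x i) : -c ≤ ∑ i, f i * x i :=
  calc -c ≤ (∑ i, f i) * -c := by linarith [mul_le_mul_of_nonneg_right hf1 hc]
    _ = ∑ i, f i * -c := by rw [Finset.sum_mul]
    _ ≤ ∑ i, f i * x i :=
        Finset.sum_le_sum fun i _ => mul_le_mul_of_nonneg_left (hx i) (hf0 i)

variable {Ω : Type*} [MeasurableSpace Ω] {P : Measure Ω} {ξ : Ω → ι → ℝ}

lemma memLp_sum_mul {p : ENNReal} (hξ : ∀ i, MemLp (fun ω => ξ ω i) p P) (f : ι → ℝ) :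
    MemLp (fun ω => ∑ i, f i * ξ ω i) p P :=
  memLp_finsetSum _ fun i _ => (hξ i).const_mul (f i)

lemma integral_sum_mul_eq_zero (hξ : ∀ i, Integrable (fun ω => ξ ω i) P)
    (hmean : ∀ i, ∫ ω, ξ ω i ∂P = 0) (f : ι → ℝ) : ∫ ω, ∑ i, f i * ξ ω i ∂P = 0 := by
  rw [integral_finsetSum _ fun i _ => (hξ i).const_mul (f i)]
  simp [integral_const_mul, hmean]

lemma integral_sum_mul_sq (hξ : ∀ i, MemLp (fun ω => ξ ω i) 2 P) (Q : Matrix ι ι ℝ)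
    (hQ : ∀ i j, Q i j = ∫ ω, ξ ω i * ξ ω j ∂P) (f : ι → ℝ) :
    ∫ ω, (∑ i, f i * ξ ω i) ^ 2 ∂P = ∑ i, ∑ j, f i * Q i j * f j := by
  have hint : ∀ i j, Integrable (fun ω => f i * f j * (ξ ω i * ξ ω j)) P := fun i j =>
    ((hξ i).integrable_mul (hξ j)).const_mul _
  have hexp : ∀ ω, (∑ i, f i * ξ ω i) ^ 2 = ∑ i, ∑ j, f i * f j * (ξ ω i * ξ ω j) := fun ω => by
    rw [sq, Finset.sum_mul_sum]
    exact Finset.sum_congr rfl fun i _ => Finset.sum_congr rfl fun j _ => by ring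
  simp_rw [hexp]
  rw [integral_finsetSum _ fun i _ => integrable_finsetSum _ fun j _ => hint i j]
  refine Finset.sum_congr rfl fun i _ => ?_
  rw [integral_finsetSum _ fun j _ => hint i j]
  refine Finset.sum_congr rfl fun j _ => ?_
  rw [integral_const_mul, hQ]
  ring

end Portfolio

theorem high_frequency_mean_variance_expansion_general
    {Ω : Type*} [MeasurableSpace Ω] (P : Measure Ω) [IsProbabilityMeasure P]
    {m : ℕ} (ξ : Ω → Fin m → ℝ) (hmeas : Measurable ξ)
    (hmean : ∀ i, ∫ ω, ξ ω i ∂P = 0)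
    (Q : Matrix (Fin m) (Fin m) ℝ)
    (hQ : ∀ i j, Q i j = ∫ ω, ξ ω i * ξ ω j ∂P)
    (hmom3 : Integrable (fun ω => ‖ξ ω‖ ^ 3) P)
    (c : ℝ) (hc : 0 < c) (hbd : ∀ i, ∀ᵐ ω ∂P, -c ≤ ξ ω i)
    (μv : Fin m → ℝ)
    (K : Set (Fin m → ℝ))
    (hKS : K ⊆ {f : Fin m → ℝ | (∀ i, 0 ≤ f i) ∧ ∑ i, f i ≤ 1}) :
    ∃ C : ℝ, 0 < C ∧ ∃ N : ℕ, ∀ n : ℕ, N ≤ n → ∀ f ∈ K,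
      |(n : ℝ) * ∫ ω, Real.log (1 + (∑ i, f i * μv i) / n
            + (∑ i, f i * ξ ω i) / Real.sqrt n) ∂P
          - ((∑ i, f i * μv i) - (1 / 2) * ∑ i, ∑ j, f i * Q i j * f j)|
        ≤ C / Real.sqrt n
      ∧ |(n : ℝ) * variance (fun ω => Real.log (1 + (∑ i, f i * μv i) / n
            + (∑ i, f i * ξ ω i) / Real.sqrt n)) P
          - ∑ i, ∑ j, f i * Q i j * f j|
        ≤ C / Real.sqrt n := by
  have hξ : MemLp ξ 3 P := (integrable_norm_rpow_iff hmeas.aestronglyMeasurable (by norm_num)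
    (by norm_num)).1 (by simpa using hmom3)
  set A := ‖μv‖
  set G : Ω → ℝ := fun ω => A + ‖ξ ω‖
  have hG : MemLp G 3 P := (memLp_const A).add hξ.norm
  set C : ℝ := 6 * ∫ ω, G ω ^ 3 ∂P + A ^ 2 + (A + 2 * ∫ ω, G ω ^ 2 ∂P) ^ 2
  have hC0 : 0 ≤ C := by
    have : 0 ≤ ∫ ω, G ω ^ 3 ∂P := integral_nonneg fun ω => by positivity
    positivity
  refine ⟨C + 1, by positivity, ⌈(2 * (A + c) + 1) ^ 2⌉₊, fun n hn f hf => ?_⟩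
  obtain ⟨hf0, hf1⟩ := hKS hf
  have ha : |∑ i, f i * μv i| ≤ A := abs_sum_mul_le_norm hf0 hf1 μv
  have hr : 2 * (A + c) + 1 ≤ √(n : ℝ) :=
    Real.le_sqrt_of_sq_le ((Nat.le_ceil _).trans (by exact_mod_cast hn))
  obtain ⟨hmean_le, hvar_le⟩ := log_one_add_mean_variance_expansion (r := √(n : ℝ))
    (S := fun ω => ∑ i, f i * ξ ω i) (memLp_sum_mul hξ.eval f)
    (integral_sum_mul_eq_zero (fun i => (hξ.eval i).integrable (by norm_num)) hmean f)
    (integral_sum_mul_sq (fun i => (hξ.eval i).mono_exponent (by norm_num)) Q hQ f)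
    (by filter_upwards [ae_all_iff.2 hbd] with ω hω using neg_le_sum_mul hf0 hf1 hc.le hω)
    hG ha (fun ω => add_le_add le_rfl (abs_sum_mul_le_norm hf0 hf1 (ξ ω)))
    (by linarith [norm_nonneg μv]) (by linarith)
  rw [Real.sq_sqrt (Nat.cast_nonneg n)] at hmean_le hvar_le
  have hC : C / √(n : ℝ) ≤ (C + 1) / √(n : ℝ) := by gcongr; linarith
  exact ⟨hmean_le.trans hC, hvar_le.trans hC⟩

/-- high-frequency mean/variance expansion for multiple assets.
If `ξ` is an `ℝᵐ`-valued random vector with mean `0`, covariance matrix `Q`,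
`E‖ξ‖³ < ∞`, and components bounded below by `-c` a.s., then uniformly over a
compact subset `K` of the simplex, for large `n`,
`n E[log(1 + f·μ/n + f·ξ/√n)] = f·μ - (1/2) f·Qf + O(n^{-1/2})` and
`n Var[log(1 + f·μ/n + f·ξ/√n)] = f·Qf + O(n^{-1/2})`. -/
theorem high_frequency_mean_variance_expansion
    {Ω : Type*} [MeasurableSpace Ω] (P : Measure Ω) [IsProbabilityMeasure P]
    {m : ℕ} (ξ : Ω → Fin m → ℝ) (hmeas : Measurable ξ)
    (hmean : ∀ i, ∫ ω, ξ ω i ∂P = 0)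
    (Q : Matrix (Fin m) (Fin m) ℝ)
    (hQ : ∀ i j, Q i j = ∫ ω, ξ ω i * ξ ω j ∂P)
    (hmom3 : Integrable (fun ω => ‖ξ ω‖ ^ 3) P)
    (c : ℝ) (hc : 0 < c) (hbd : ∀ i, ∀ᵐ ω ∂P, -c ≤ ξ ω i)
    (μv : Fin m → ℝ)
    (K : Set (Fin m → ℝ)) (hK : IsCompact K)
    (hKS : K ⊆ {f : Fin m → ℝ | (∀ i, 0 ≤ f i) ∧ ∑ i, f i ≤ 1}) :
    ∃ C : ℝ, 0 < C ∧ ∃ N : ℕ, ∀ n : ℕ, N ≤ n → ∀ f ∈ K,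
      |(n : ℝ) * ∫ ω, Real.log (1 + (∑ i, f i * μv i) / n
            + (∑ i, f i * ξ ω i) / Real.sqrt n) ∂P
          - ((∑ i, f i * μv i) - (1 / 2) * ∑ i, ∑ j, f i * Q i j * f j)|
        ≤ C / Real.sqrt n
      ∧ |(n : ℝ) * variance (fun ω => Real.log (1 + (∑ i, f i * μv i) / n
            + (∑ i, f i * ξ ω i) / Real.sqrt n)) P
          - ∑ i, ∑ j, f i * Q i j * f j|
        ≤ C / Real.sqrt n :=
  high_frequency_mean_variance_expansion_general P ξ hmeas hmean Q hQ hmom3 c hc hbd μv K hKS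
end

section
/- Let ξ₁, ξ₂, … be identically distributed real random variables with E[|ξ₁|³] < ∞, let μ ∈ ℝ, σ > 0, f ∈ (0,1), and T > 0. Set X_{n,k} = (μ − σ²/2)/n + σ·ξ_k/√n. Then there is a constant C (depending only on T, f, μ, σ and E|ξ₁|³) such that for all n ≥ 1: E[ sup_{0 ≤ t ≤ T} | Σ_{k=1}^{⌊nt⌋} ( ln(1 − f + f·e^{X_{n,k}}) − f·X_{n,k} − (1/2)·f(1−f)·X_{n,k}² ) | ] ≤ C·n^{−1/2}. -/
/-!
With `F x = log (1 - f + f eˣ)`, one has `F' = u`, `F'' = u (1 - u)` and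
`F''' = u (1 - u) (1 - 2u)` for `u x = f eˣ / (1 - f + f eˣ) ∈ [0, 1]`, so `|F'''| ≤ 1/4` and the
second-order Taylor remainder at `0` is at most `|x|³ / 4`. Bounding the supremum over `t` by the
sum of all `⌊nT⌋` absolute remainders, each of expectation
`O(E|X_{n,1}|³) = O(n^{-3/2} (1 + E|ξ₁|³))`, gives `O(T n^{-1/2})`.
-/

open MeasureTheory ProbabilityTheory Real

/-- The weight of the risky asset after one period with log-return `x`, starting from weight
`f`; it is the derivative of `x ↦ log (1 - f + f eˣ)`. -/
noncomputable def riskyShare (f x : ℝ) : ℝ := f * exp x / (1 - f + f * exp x)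

section riskyShare

variable {f : ℝ}

lemma one_sub_add_mul_exp_pos (hf : f ∈ Set.Icc (0 : ℝ) 1) (x : ℝ) :
    0 < 1 - f + f * exp x := by
  rcases hf.2.lt_or_eq with hf1 | rfl
  · nlinarith [exp_pos x, hf.1]
  · simpa using exp_pos x

lemma riskyShare_mem_Icc (hf : f ∈ Set.Icc (0 : ℝ) 1) (x : ℝ) :
    riskyShare f x ∈ Set.Icc (0 : ℝ) 1 := by
  have hd := one_sub_add_mul_exp_pos hf x
  refine ⟨div_nonneg (mul_nonneg hf.1 (exp_pos x).le) hd.le, ?_⟩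
  rw [riskyShare, div_le_one hd]
  linarith [hf.2]

lemma riskyShare_zero : riskyShare f 0 = f := by
  simp [riskyShare]

lemma hasDerivAt_log_one_sub_add_mul_exp (hf : f ∈ Set.Icc (0 : ℝ) 1) (x : ℝ) :
    HasDerivAt (fun y => log (1 - f + f * exp y)) (riskyShare f x) x :=
  (((hasDerivAt_exp x).const_mul f).const_add (1 - f)).log
    (one_sub_add_mul_exp_pos hf x).ne'

lemma hasDerivAt_riskyShare (hf : f ∈ Set.Icc (0 : ℝ) 1) (x : ℝ) :
    HasDerivAt (riskyShare f) (riskyShare f x * (1 - riskyShare f x)) x := by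
  have hd := one_sub_add_mul_exp_pos hf x
  have hnum := (hasDerivAt_exp x).const_mul f
  refine (hnum.div (hnum.const_add (1 - f)) hd.ne').congr_deriv ?_
  simp only [riskyShare]
  field_simp

end riskyShare

lemma abs_le_mul_abs_pow_succ_of_hasDerivAt {g g' : ℝ → ℝ} {C : ℝ} {k : ℕ}
    (hg : ∀ y, HasDerivAt g (g' y) y) (hg0 : g 0 = 0) (hg' : ∀ y, |g' y| ≤ C * |y| ^ k)
    (x : ℝ) : |g x| ≤ C * |x| ^ (k + 1) := by
  have hC : 0 ≤ C := by simpa using (abs_nonneg _).trans (hg' 1)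
  have hbound : ∀ y ∈ Set.uIcc 0 x, ‖g' y‖ ≤ C * |x| ^ k := fun y hy =>
    (hg' y).trans <| mul_le_mul_of_nonneg_left
      (pow_le_pow_left₀ (abs_nonneg y) (by simpa using Set.abs_sub_left_of_mem_uIcc hy) k) hC
  have := (convex_uIcc (0 : ℝ) x).norm_image_sub_le_of_norm_hasDerivWithin_le
    (fun y _ => (hg y).hasDerivWithinAt) hbound Set.left_mem_uIcc Set.right_mem_uIcc
  simpa [hg0, pow_succ, mul_assoc] using this

lemma abs_mul_one_sub_mul_one_sub_two_mul_le {u : ℝ} (hu : u ∈ Set.Icc (0 : ℝ) 1) :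
    |u * (1 - u) * (1 - 2 * u)| ≤ 1 / 4 := by
  have hq : |u * (1 - u)| ≤ 1 / 4 := by
    rw [abs_of_nonneg (mul_nonneg hu.1 (sub_nonneg.2 hu.2))]
    nlinarith [sq_nonneg (2 * u - 1)]
  have hl : |1 - 2 * u| ≤ 1 := abs_le.2 ⟨by linarith [hu.2], by linarith [hu.1]⟩
  simpa [abs_mul] using mul_le_mul hq hl (abs_nonneg _) (by norm_num)

lemma abs_log_one_sub_add_mul_exp_sub_taylor_le {f : ℝ} (hf : f ∈ Set.Icc (0 : ℝ) 1) (x : ℝ) :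
    |log (1 - f + f * exp x) - f * x - (1 / 2) * (f * (1 - f)) * x ^ 2| ≤ |x| ^ 3 / 4 := by
  have hu := hasDerivAt_riskyShare hf
  have h₂ := abs_le_mul_abs_pow_succ_of_hasDerivAt (k := 0) (C := 1 / 4)
    (g := fun y => riskyShare f y * (1 - riskyShare f y) - f * (1 - f))
    (g' := fun y => riskyShare f y * (1 - riskyShare f y) * (1 - 2 * riskyShare f y))
    (fun y => ((hu y).mul ((hu y).const_sub 1)).sub_const _ |>.congr_deriv (by ring))
    (by simp [riskyShare_zero])
    (fun y => by simpa using abs_mul_one_sub_mul_one_sub_two_mul_le (riskyShare_mem_Icc hf y))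
  have h₁ := abs_le_mul_abs_pow_succ_of_hasDerivAt
    (g := fun y => riskyShare f y - f - f * (1 - f) * y)
    (fun y => ((hu y).sub_const f).sub ((hasDerivAt_id y).const_mul _) |>.congr_deriv (by simp))
    (by simp [riskyShare_zero]) h₂
  have h₀ := abs_le_mul_abs_pow_succ_of_hasDerivAt
    (g := fun y => log (1 - f + f * exp y) - f * y - (1 / 2) * (f * (1 - f)) * y ^ 2)
    (fun y => (((hasDerivAt_log_one_sub_add_mul_exp hf y).sub ((hasDerivAt_id y).const_mul f)).sub
      ((hasDerivAt_pow 2 y).const_mul _)).congr_deriv (by simp; ring))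
    (by simp) h₁ x
  linarith

lemma abs_add_mul_pow_three_le (a b c : ℝ) :
    |a + b * c| ^ 3 ≤ 4 * (|a| ^ 3 + |b| ^ 3 * |c| ^ 3) := by
  calc |a + b * c| ^ 3 ≤ (|a| + |b| * |c|) ^ 3 := by
        gcongr; exact (abs_add_le _ _).trans_eq (by rw [abs_mul])
    _ ≤ 2 ^ (3 - 1) * (|a| ^ 3 + (|b| * |c|) ^ 3) := add_pow_le (by positivity) (by positivity) 3
    _ = 4 * (|a| ^ 3 + |b| ^ 3 * |c| ^ 3) := by ring

lemma iSup_abs_sum_Icc_floor_le {c : ℝ} (hc : 0 ≤ c) (T : ℝ) {g B : ℕ → ℝ}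
    (hgB : ∀ k, |g k| ≤ B k) :
    ⨆ t ∈ Set.Icc (0 : ℝ) T, |∑ k ∈ Finset.Icc 1 ⌊c * t⌋₊, g k|
      ≤ ∑ k ∈ Finset.Icc 1 ⌊c * T⌋₊, B k := by
  have hB : 0 ≤ ∑ k ∈ Finset.Icc 1 ⌊c * T⌋₊, B k :=
    Finset.sum_nonneg fun k _ => (abs_nonneg _).trans (hgB k)
  refine Real.iSup_le (fun t => Real.iSup_le (fun ht => ?_) hB) hB
  calc |∑ k ∈ Finset.Icc 1 ⌊c * t⌋₊, g k| ≤ ∑ k ∈ Finset.Icc 1 ⌊c * t⌋₊, B k :=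
        (Finset.abs_sum_le_sum_abs _ _).trans (Finset.sum_le_sum fun k _ => hgB k)
    _ ≤ ∑ k ∈ Finset.Icc 1 ⌊c * T⌋₊, B k :=
        Finset.sum_le_sum_of_subset_of_nonneg
          (Finset.Icc_subset_Icc_right (Nat.floor_le_floor (by gcongr; exact ht.2)))
          fun k _ _ => (abs_nonneg _).trans (hgB k)

lemma integral_le_card_mul_integral_of_identDistrib {Ω ι α : Type*} [MeasurableSpace Ω]
    [MeasurableSpace α] {P : Measure Ω} {ξ : ι → Ω → α} {Y : Ω → α}
    (hξ : ∀ k, IdentDistrib (ξ k) Y P P) {φ : α → ℝ} (hφ : Measurable φ)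
    (hφY : Integrable (fun ω => φ (Y ω)) P) (s : Finset ι) {Z : Ω → ℝ} (hZ₀ : ∀ ω, 0 ≤ Z ω)
    (hZ : ∀ ω, Z ω ≤ ∑ k ∈ s, φ (ξ k ω)) :
    ∫ ω, Z ω ∂P ≤ s.card * ∫ ω, φ (Y ω) ∂P := by
  have hcomp : ∀ k, IdentDistrib (fun ω => φ (ξ k ω)) (fun ω => φ (Y ω)) P P :=
    fun k => (hξ k).comp hφ
  have hint : ∀ k ∈ s, Integrable (fun ω => φ (ξ k ω)) P :=
    fun k _ => (hcomp k).integrable_iff.2 hφY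
  calc ∫ ω, Z ω ∂P ≤ ∫ ω, ∑ k ∈ s, φ (ξ k ω) ∂P :=
        integral_mono_of_nonneg (ae_of_all _ hZ₀) (integrable_finsetSum s hint) (ae_of_all _ hZ)
    _ = s.card * ∫ ω, φ (Y ω) ∂P := by
        rw [integral_finsetSum s hint, Finset.sum_congr rfl fun k _ => (hcomp k).integral_eq]
        simp

lemma floor_mul_mul_le_div_sqrt {n : ℕ} (hn : 1 ≤ n) {T : ℝ} (hT : 0 ≤ T) (m s E : ℝ)
    (hE : 0 ≤ E) :
    ⌊(n : ℝ) * T⌋₊ * (|m / n| ^ 3 + |s / √n| ^ 3 * E) ≤ T * (|m| ^ 3 + |s| ^ 3 * E) / √n := by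
  set r := √(n : ℝ)
  have hr : 1 ≤ r := one_le_sqrt.2 (by exact_mod_cast hn)
  have hnr : (n : ℝ) = r ^ 2 := (sq_sqrt n.cast_nonneg).symm
  rw [hnr]
  have hN : (⌊r ^ 2 * T⌋₊ : ℝ) ≤ r ^ 2 * T := Nat.floor_le (by positivity)
  have hr0 : 0 < r := by linarith
  calc ⌊r ^ 2 * T⌋₊ * (|m / r ^ 2| ^ 3 + |s / r| ^ 3 * E)
      ≤ r ^ 2 * T * (|m / r ^ 2| ^ 3 + |s / r| ^ 3 * E) := by gcongr
    _ = T * (|m| ^ 3 / r ^ 4 + |s| ^ 3 * E / r) := by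
        rw [abs_div, abs_div, abs_of_pos hr0, abs_of_pos (by positivity : (0 : ℝ) < r ^ 2)]
        field_simp
    _ ≤ T * (|m| ^ 3 / r + |s| ^ 3 * E / r) := by
        gcongr; exact le_self_pow₀ hr (by norm_num)
    _ = T * (|m| ^ 3 + |s| ^ 3 * E) / r := by ring

theorem geometric_hf_taylor_remainder_general
    {Ω : Type*} [MeasurableSpace Ω] (P : Measure Ω) [IsProbabilityMeasure P]
    (ξ : ℕ → Ω → ℝ) (hmeas : ∀ k, Measurable (ξ k))
    (hident : ∀ k, Measure.map (ξ k) P = Measure.map (ξ 1) P)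
    (hmom3 : Integrable (fun ω => |ξ 1 ω| ^ 3) P)
    (μ σ : ℝ) (f : ℝ) (hf : f ∈ Set.Ioo (0 : ℝ) 1)
    (T : ℝ) (hT : 0 < T) :
    ∃ C : ℝ, ∀ n : ℕ, 1 ≤ n →
      (∫ ω, (⨆ t ∈ Set.Icc (0 : ℝ) T,
        |∑ k ∈ Finset.Icc 1 ⌊(n : ℝ) * t⌋₊,
          (Real.log (1 - f + f * Real.exp ((μ - σ ^ 2 / 2) / n + σ * ξ k ω / Real.sqrt n))
            - f * ((μ - σ ^ 2 / 2) / n + σ * ξ k ω / Real.sqrt n)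
            - (1 / 2) * (f * (1 - f))
              * ((μ - σ ^ 2 / 2) / n + σ * ξ k ω / Real.sqrt n) ^ 2)|) ∂P)
      ≤ C / Real.sqrt n := by
  have hξ : ∀ k, IdentDistrib (ξ k) (ξ 1) P P :=
    fun k => ⟨(hmeas k).aemeasurable, (hmeas 1).aemeasurable, hident k⟩
  refine ⟨T * (|μ - σ ^ 2 / 2| ^ 3 + |σ| ^ 3 * ∫ ω, |ξ 1 ω| ^ 3 ∂P), fun n hn => ?_⟩
  set a := (μ - σ ^ 2 / 2) / n
  have hterm : ∀ x, |log (1 - f + f * exp (a + σ * x / √n)) - f * (a + σ * x / √n)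
      - (1 / 2) * (f * (1 - f)) * (a + σ * x / √n) ^ 2| ≤ |a| ^ 3 + |σ / √n| ^ 3 * |x| ^ 3 := by
    intro x
    have hcube := abs_add_mul_pow_three_le a (σ / √n) x
    rw [← mul_div_right_comm] at hcube
    linarith [abs_log_one_sub_add_mul_exp_sub_taylor_le (Set.Ioo_subset_Icc_self hf)
      (a + σ * x / √n)]
  calc _ ≤ (Finset.Icc 1 ⌊(n : ℝ) * T⌋₊).card * ∫ ω, (|a| ^ 3 + |σ / √n| ^ 3 * |ξ 1 ω| ^ 3) ∂P :=
        integral_le_card_mul_integral_of_identDistrib hξ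
          (φ := fun x => |a| ^ 3 + |σ / √n| ^ 3 * |x| ^ 3) (by fun_prop)
          ((integrable_const _).add (hmom3.const_mul _)) _
          (fun ω => Real.iSup_nonneg fun t => Real.iSup_nonneg fun _ => abs_nonneg _)
          (fun ω => iSup_abs_sum_Icc_floor_le n.cast_nonneg T fun k => hterm (ξ k ω))
    _ ≤ _ := by
        rw [integral_add (integrable_const _) (hmom3.const_mul _), integral_const_mul]
        simpa using floor_mul_mul_le_div_sqrt hn hT.le (μ - σ ^ 2 / 2) σ _
          (integral_nonneg fun ω => by positivity)

/-- the key remainder estimate for geometric high-frequency compounding.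
With identically distributed `ξ₁, ξ₂, …` having `E|ξ₁|³ < ∞`, and
`X_{n,k} = (μ - σ²/2)/n + σ ξ_k/√n`, the expected uniform (over `t ∈ [0,T]`) error of
the second-order Taylor approximation of `Σ_{k ≤ ⌊nt⌋} log(1 - f + f e^{X_{n,k}})`
is `O(n^{-1/2})`. -/
theorem geometric_hf_taylor_remainder
    {Ω : Type*} [MeasurableSpace Ω] (P : Measure Ω) [IsProbabilityMeasure P]
    (ξ : ℕ → Ω → ℝ) (hmeas : ∀ k, Measurable (ξ k))
    (hident : ∀ k, Measure.map (ξ k) P = Measure.map (ξ 1) P)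
    (hmom3 : Integrable (fun ω => |ξ 1 ω| ^ 3) P)
    (μ σ : ℝ) (hσ : 0 < σ) (f : ℝ) (hf : f ∈ Set.Ioo (0 : ℝ) 1)
    (T : ℝ) (hT : 0 < T) :
    ∃ C : ℝ, ∀ n : ℕ, 1 ≤ n →
      (∫ ω, (⨆ t ∈ Set.Icc (0 : ℝ) T,
        |∑ k ∈ Finset.Icc 1 ⌊(n : ℝ) * t⌋₊,
          (Real.log (1 - f + f * Real.exp ((μ - σ ^ 2 / 2) / n + σ * ξ k ω / Real.sqrt n))
            - f * ((μ - σ ^ 2 / 2) / n + σ * ξ k ω / Real.sqrt n)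
            - (1 / 2) * (f * (1 - f))
              * ((μ - σ ^ 2 / 2) / n + σ * ξ k ω / Real.sqrt n) ^ 2)|) ∂P)
      ≤ C / Real.sqrt n :=
  geometric_hf_taylor_remainder_general P ξ hmeas hident hmom3 μ σ f hf T hT
end

section
/- Let ξ be a real random variable with E[ξ] = 0, E[ξ²] = 1, E[|ξ|³] < ∞, and let 0 < μ < σ². For n ≥ 1 define g_n(f) = n·E[ln(1 − f + f·exp((μ − σ²/2)/n + σ·ξ/√n))] for f ∈ [0,1]. Then each g_n attains its maximum over [0,1] at a unique point f_n*, and lim_{n→∞} f_n* = μ/σ² and lim_{n→∞} g_n(f_n*) = μ²/(2σ²). -/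
/-!
Uniformly in `f ∈ [0, 1]`, `log (1 - f + f eˣ) = f x + f (1 - f) x² / 2 + O(|x|³)`. Taking
expectations at `x = (μ - σ²/2)/n + σ ξ/√n` and using `E ξ = 0`, `E ξ² = 1`, `E |ξ|³ < ∞` gives
`g_n(f) = μ f - σ² f² / 2 + O(n^{-1/2})` uniformly in `f`. A uniform limit with a strict maximum
forces the maximizers and the maximal values to converge to those of the limit, here `μ/σ²` and
`μ²/(2σ²)`. The maximizer `f_n*` exists by continuity on `[0, 1]` and is unique because
`f ↦ E log (1 - f + f e^X)` is strictly concave as soon as `X` is not a.s. zero.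
-/

open MeasureTheory ProbabilityTheory Real Filter Topology Set

theorem abs_sub_le_mul_abs_pow_of_hasDerivAt {F F' : ℝ → ℝ} {C : ℝ} {k : ℕ}
    (hF : ∀ y, HasDerivAt F (F' y) y) (hF' : ∀ y, |F' y| ≤ C * |y| ^ k) (x : ℝ) :
    |F x - F 0| ≤ C * |x| ^ (k + 1) := by
  have hC : 0 ≤ C := by simpa using (abs_nonneg _).trans (hF' 1)
  have hbound : ∀ y ∈ uIcc 0 x, ‖F' y‖ ≤ C * |x| ^ k := fun y hy => by
    have : |y| ≤ |x| := by simpa using abs_sub_left_of_mem_uIcc hy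
    exact (hF' y).trans (by gcongr)
  have := (convex_uIcc 0 x).norm_image_sub_le_of_norm_hasDerivWithin_le
    (fun y _ => (hF y).hasDerivWithinAt) hbound left_mem_uIcc right_mem_uIcc
  simpa [pow_succ, mul_assoc] using this

theorem memLp_three_of_integrable_abs_pow {Ω : Type*} [MeasurableSpace Ω] {P : Measure Ω}
    {ξ : Ω → ℝ} (hξ : AEStronglyMeasurable ξ P) (h : Integrable (fun ω => |ξ ω| ^ 3) P) :
    MemLp ξ 3 P := by
  rw [← integrable_norm_rpow_iff hξ (by norm_num) (by norm_num)]
  simpa using h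

section ApproximateMaximizers

variable {α : Type*} {s : Set α} {G Q : α → ℝ} {x y : α} {ε : ℝ}

theorem abs_sub_le_of_isMaxOn_of_abs_sub_le (hx : x ∈ s) (hy : y ∈ s) (hG : IsMaxOn G s x)
    (hQ : IsMaxOn Q s y) (h : ∀ z ∈ s, |G z - Q z| ≤ ε) : |G x - Q y| ≤ ε := by
  have := abs_le.1 (h x hx)
  have := abs_le.1 (h y hy)
  rw [abs_le]
  constructor <;> linarith [isMaxOn_iff.1 hG y hy, isMaxOn_iff.1 hQ x hx]

theorem sub_le_of_isMaxOn_of_abs_sub_le (hx : x ∈ s) (hy : y ∈ s) (hG : IsMaxOn G s x)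
    (h : ∀ z ∈ s, |G z - Q z| ≤ ε) : Q y - Q x ≤ 2 * ε := by
  have := abs_le.1 (h x hx)
  have := abs_le.1 (h y hy)
  linarith [isMaxOn_iff.1 hG y hy]

theorem tendsto_of_isMaxOn_of_abs_sub_le {ι : Type*} {l : Filter ι} {G : ι → α → ℝ}
    {x : ι → α} {ε : ι → ℝ} (hε : Tendsto ε l (𝓝 0)) (hy : y ∈ s) (hQ : IsMaxOn Q s y)
    (hx : ∀ i, x i ∈ s) (hG : ∀ i, IsMaxOn (G i) s (x i))
    (h : ∀ᶠ i in l, ∀ z ∈ s, |G i z - Q z| ≤ ε i) :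
    Tendsto (fun i => G i (x i)) l (𝓝 (Q y)) ∧ Tendsto (fun i => Q (x i)) l (𝓝 (Q y)) := by
  constructor
  · rw [tendsto_iff_norm_sub_tendsto_zero]
    exact squeeze_zero' (Eventually.of_forall fun i => norm_nonneg _)
      (h.mono fun i hi => abs_sub_le_of_isMaxOn_of_abs_sub_le (hx i) hy (hG i) hQ hi) hε
  · rw [tendsto_iff_norm_sub_tendsto_zero]
    refine squeeze_zero' (Eventually.of_forall fun i => norm_nonneg _) (h.mono fun i hi => ?_)
      (by simpa using hε.const_mul 2)
    rw [Real.norm_eq_abs, abs_sub_comm, abs_of_nonneg (sub_nonneg.2 (isMaxOn_iff.1 hQ _ (hx i)))]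
    exact sub_le_of_isMaxOn_of_abs_sub_le (hx i) hy (hG i) hi

end ApproximateMaximizers

namespace Kelly

/-- Log of the one-period wealth ratio when the fraction `f` is held in an asset with
log-return `x`. -/
noncomputable def logGrowth (f x : ℝ) : ℝ := log (1 - f + f * exp x)

/-- The post-move weight of the risky asset. -/
noncomputable def riskyWeight (f x : ℝ) : ℝ := f * exp x / (1 - f + f * exp x)

/-- The growth rate of the geometric Brownian motion model when the fraction `f` is invested. -/
noncomputable def gbmGrowthRate (μ σ f : ℝ) : ℝ := μ * f - σ ^ 2 * f ^ 2 / 2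

variable {f : ℝ}

theorem abs_mul_one_sub_le (hf : f ∈ Icc (0 : ℝ) 1) : |f * (1 - f)| ≤ 1 / 4 := by
  rw [abs_le]
  constructor <;> nlinarith [hf.1, hf.2, sq_nonneg (2 * f - 1)]

theorem one_sub_add_mul_exp_pos (hf : f ∈ Icc (0 : ℝ) 1) (x : ℝ) : 0 < 1 - f + f * exp x := by
  nlinarith [hf.1, hf.2, exp_pos x, mul_nonneg hf.1 (exp_pos x).le]

theorem hasDerivAt_one_sub_add_mul_exp (f x : ℝ) :
    HasDerivAt (fun y => 1 - f + f * exp y) (f * exp x) x := by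
  simpa using ((hasDerivAt_exp x).const_mul f).const_add (1 - f)

theorem riskyWeight_mem_Icc (hf : f ∈ Icc (0 : ℝ) 1) (x : ℝ) :
    riskyWeight f x ∈ Icc (0 : ℝ) 1 := by
  have hD := one_sub_add_mul_exp_pos hf x
  refine ⟨div_nonneg (mul_nonneg hf.1 (exp_pos x).le) hD.le, ?_⟩
  rw [riskyWeight, div_le_one hD]
  linarith [hf.2]

@[simp] theorem riskyWeight_zero (f : ℝ) : riskyWeight f 0 = f := by simp [riskyWeight]

@[simp] theorem logGrowth_zero (f : ℝ) : logGrowth f 0 = 0 := by simp [logGrowth]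

theorem hasDerivAt_logGrowth (hf : f ∈ Icc (0 : ℝ) 1) (x : ℝ) :
    HasDerivAt (logGrowth f) (riskyWeight f x) x :=
  (hasDerivAt_one_sub_add_mul_exp f x).log (one_sub_add_mul_exp_pos hf x).ne'

theorem hasDerivAt_riskyWeight (hf : f ∈ Icc (0 : ℝ) 1) (x : ℝ) :
    HasDerivAt (riskyWeight f) (riskyWeight f x * (1 - riskyWeight f x)) x := by
  have hD := (one_sub_add_mul_exp_pos hf x).ne'
  refine (((hasDerivAt_exp x).const_mul f).div (hasDerivAt_one_sub_add_mul_exp f x)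
    hD).congr_deriv ?_
  simp only [riskyWeight]
  field_simp

theorem continuous_logGrowth (hf : f ∈ Icc (0 : ℝ) 1) : Continuous (logGrowth f) :=
  continuous_iff_continuousAt.2 fun x => (hasDerivAt_logGrowth hf x).continuousAt

theorem abs_logGrowth_le (hf : f ∈ Icc (0 : ℝ) 1) (x : ℝ) : |logGrowth f x| ≤ |x| := by
  have hq : ∀ y, |riskyWeight f y| ≤ 1 * |y| ^ 0 := fun y => by
    obtain ⟨h0, h1⟩ := riskyWeight_mem_Icc hf y
    simpa [abs_of_nonneg h0] using h1
  simpa using abs_sub_le_mul_abs_pow_of_hasDerivAt (hasDerivAt_logGrowth hf) hq x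

theorem abs_riskyWeight_mul_sub_le (hf : f ∈ Icc (0 : ℝ) 1) (x : ℝ) :
    |riskyWeight f x * (1 - riskyWeight f x) - f * (1 - f)| ≤ 1 / 4 * |x| ^ 1 := by
  have hd : ∀ y, HasDerivAt (fun y => riskyWeight f y * (1 - riskyWeight f y))
      (riskyWeight f y * (1 - riskyWeight f y) * (1 - 2 * riskyWeight f y)) y := fun y =>
    ((hasDerivAt_riskyWeight hf y).mul
      ((hasDerivAt_riskyWeight hf y).const_sub 1)).congr_deriv (by ring)
  have hd' : ∀ y, |riskyWeight f y * (1 - riskyWeight f y) * (1 - 2 * riskyWeight f y)|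
      ≤ 1 / 4 * |y| ^ 0 := fun y => by
    have hq := riskyWeight_mem_Icc hf y
    have h2q : |1 - 2 * riskyWeight f y| ≤ 1 := abs_le.2 ⟨by linarith [hq.2], by linarith [hq.1]⟩
    rw [abs_mul, pow_zero, mul_one]
    exact (mul_le_mul (abs_mul_one_sub_le hq) h2q (abs_nonneg _) (by norm_num)).trans_eq
      (mul_one _)
  simpa using abs_sub_le_mul_abs_pow_of_hasDerivAt hd hd' x

theorem abs_riskyWeight_sub_le (hf : f ∈ Icc (0 : ℝ) 1) (x : ℝ) :
    |riskyWeight f x - (f + f * (1 - f) * x)| ≤ 1 / 4 * |x| ^ 2 := by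
  have hd : ∀ y, HasDerivAt (fun y => riskyWeight f y - (f + f * (1 - f) * y))
      (riskyWeight f y * (1 - riskyWeight f y) - f * (1 - f)) y := fun y =>
    ((hasDerivAt_riskyWeight hf y).sub
      (((hasDerivAt_id y).const_mul (f * (1 - f))).const_add f)).congr_deriv (by ring)
  simpa using abs_sub_le_mul_abs_pow_of_hasDerivAt hd (abs_riskyWeight_mul_sub_le hf) x

theorem abs_logGrowth_sub_le (hf : f ∈ Icc (0 : ℝ) 1) (x : ℝ) :
    |logGrowth f x - (f * x + f * (1 - f) * x ^ 2 / 2)| ≤ 1 / 4 * |x| ^ 3 := by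
  have hd : ∀ y, HasDerivAt (fun y => logGrowth f y - (f * y + f * (1 - f) * y ^ 2 / 2))
      (riskyWeight f y - (f + f * (1 - f) * y)) y := fun y =>
    ((hasDerivAt_logGrowth hf y).sub (((hasDerivAt_id y).const_mul f).add
      (((hasDerivAt_pow 2 y).const_mul (f * (1 - f))).div_const 2))).congr_deriv
      (by simp only [Nat.cast_ofNat, Nat.add_one_sub_one, pow_one]; ring)
  simpa using abs_sub_le_mul_abs_pow_of_hasDerivAt hd (abs_riskyWeight_sub_le hf) x

theorem strictConcaveOn_logGrowth {x : ℝ} (hx : x ≠ 0) :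
    StrictConcaveOn ℝ (Icc 0 1) (logGrowth · x) := by
  refine ⟨convex_Icc 0 1, fun f₁ h₁ f₂ h₂ hne t s ht hs hts => ?_⟩
  have hD : 1 - f₁ + f₁ * exp x ≠ 1 - f₂ + f₂ * exp x := fun h => by
    have : (f₁ - f₂) * (exp x - 1) = 0 := by linear_combination h
    rcases mul_eq_zero.1 this with h | h
    · exact hne (sub_eq_zero.1 h)
    · exact hx (exp_eq_one_iff x |>.1 (sub_eq_zero.1 h))
  have := strictConcaveOn_log_Ioi.2 (one_sub_add_mul_exp_pos h₁ x)
    (one_sub_add_mul_exp_pos h₂ x) hD ht hs hts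
  have hmix : t • (1 - f₁ + f₁ * exp x) + s • (1 - f₂ + f₂ * exp x)
      = 1 - (t • f₁ + s • f₂) + (t • f₁ + s • f₂) * exp x := by
    simp only [smul_eq_mul]; linear_combination hts
  rwa [hmix] at this

theorem concaveOn_logGrowth (x : ℝ) : ConcaveOn ℝ (Icc 0 1) (logGrowth · x) := by
  rcases eq_or_ne x 0 with rfl | hx
  · simpa using concaveOn_const (0 : ℝ) (convex_Icc (0 : ℝ) 1)
  · exact (strictConcaveOn_logGrowth hx).concaveOn

section Expectation

variable {Ω : Type*} [MeasurableSpace Ω] {P : Measure Ω} {X : Ω → ℝ}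

theorem integrable_logGrowth (hf : f ∈ Icc (0 : ℝ) 1) (hX : Integrable X P) :
    Integrable (fun ω => logGrowth f (X ω)) P :=
  hX.mono ((continuous_logGrowth hf).comp_aestronglyMeasurable hX.1)
    (ae_of_all _ fun ω => by simpa using abs_logGrowth_le hf (X ω))

theorem continuousOn_integral_logGrowth (hX : Integrable X P) :
    ContinuousOn (fun f => ∫ ω, logGrowth f (X ω) ∂P) (Icc 0 1) := by
  refine continuousOn_of_dominated (bound := fun ω => |X ω|)
    (fun f hf => (integrable_logGrowth hf hX).1)
    (fun f hf => ae_of_all _ fun ω => by simpa using abs_logGrowth_le hf (X ω)) hX.abs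
    (ae_of_all _ fun ω => ?_)
  exact ContinuousOn.log (by fun_prop) fun f hf => (one_sub_add_mul_exp_pos hf (X ω)).ne'

theorem strictConcaveOn_integral_logGrowth (hX : Integrable X P) (hX0 : ¬ X =ᵐ[P] 0) :
    StrictConcaveOn ℝ (Icc 0 1) (fun f => ∫ ω, logGrowth f (X ω) ∂P) := by
  refine ⟨convex_Icc 0 1, fun f₁ h₁ f₂ h₂ hne t s ht hs hts => ?_⟩
  have h₃ : t • f₁ + s • f₂ ∈ Icc (0 : ℝ) 1 := convex_Icc 0 1 h₁ h₂ ht.le hs.le hts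
  have hmix : Integrable (fun ω => t * logGrowth f₁ (X ω) + s * logGrowth f₂ (X ω)) P :=
    ((integrable_logGrowth h₁ hX).const_mul t).add ((integrable_logGrowth h₂ hX).const_mul s)
  set gap := fun ω => logGrowth (t • f₁ + s • f₂) (X ω)
    - (t * logGrowth f₁ (X ω) + s * logGrowth f₂ (X ω)) with hgap_def
  have hgap_nonneg : 0 ≤ᵐ[P] gap := ae_of_all _ fun ω =>
    sub_nonneg.2 ((concaveOn_logGrowth (X ω)).2 h₁ h₂ ht.le hs.le hts)
  have hgap_pos : {ω | X ω ≠ 0} ⊆ Function.support gap := fun ω hω =>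
    (sub_pos.2 ((strictConcaveOn_logGrowth hω).2 h₁ h₂ hne ht hs hts)).ne'
  have hX0' : P {ω | X ω ≠ 0} ≠ 0 := fun h => hX0 (ae_iff.2 (by simpa using h))
  have : 0 < ∫ ω, gap ω ∂P := by
    rw [integral_pos_iff_support_of_nonneg_ae hgap_nonneg
      ((integrable_logGrowth h₃ hX).sub hmix)]
    exact (pos_iff_ne_zero.2 hX0').trans_le (measure_mono hgap_pos)
  rw [hgap_def, integral_sub (integrable_logGrowth h₃ hX) hmix,
    integral_add ((integrable_logGrowth h₁ hX).const_mul t)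
      ((integrable_logGrowth h₂ hX).const_mul s), integral_const_mul, integral_const_mul] at this
  simpa only [smul_eq_mul] using sub_pos.1 this

theorem abs_integral_logGrowth_sub_le [IsFiniteMeasure P] (hf : f ∈ Icc (0 : ℝ) 1)
    (hX : MemLp X 3 P) :
    |∫ ω, logGrowth f (X ω) ∂P - (f * ∫ ω, X ω ∂P + f * (1 - f) / 2 * ∫ ω, X ω ^ 2 ∂P)|
      ≤ 1 / 4 * ∫ ω, |X ω| ^ 3 ∂P := by
  have hX1 : Integrable X P := hX.integrable (by norm_num)
  have hX2 : Integrable (fun ω => X ω ^ 2) P := (hX.mono_exponent (by norm_num)).integrable_sq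
  have hX3 : Integrable (fun ω => |X ω| ^ 3) P := by simpa using hX.integrable_norm_pow'
  have hquad : Integrable (fun ω => f * X ω + f * (1 - f) * X ω ^ 2 / 2) P :=
    (hX1.const_mul f).add ((hX2.const_mul _).div_const 2)
  calc |∫ ω, logGrowth f (X ω) ∂P - (f * ∫ ω, X ω ∂P + f * (1 - f) / 2 * ∫ ω, X ω ^ 2 ∂P)|
      = |∫ ω, (logGrowth f (X ω) - (f * X ω + f * (1 - f) * X ω ^ 2 / 2)) ∂P| := by
        rw [integral_sub (integrable_logGrowth hf hX1) hquad,
          integral_add (hX1.const_mul f) ((hX2.const_mul _).div_const 2), integral_const_mul,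
          integral_div, integral_const_mul]
        ring_nf
    _ ≤ ∫ ω, 1 / 4 * |X ω| ^ 3 ∂P :=
        (abs_integral_le_integral_abs).trans (integral_mono
          ((integrable_logGrowth hf hX1).sub hquad).abs (hX3.const_mul _)
          fun ω => abs_logGrowth_sub_le hf (X ω))
    _ = 1 / 4 * ∫ ω, |X ω| ^ 3 ∂P := integral_const_mul _ _

section Affine

variable [IsProbabilityMeasure P] {ξ : Ω → ℝ}

theorem integral_const_add_mul (hξ : Integrable ξ P) (hmean : ∫ ω, ξ ω ∂P = 0) (a b : ℝ) :
    ∫ ω, (a + b * ξ ω) ∂P = a := by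
  simp [integral_add (integrable_const a) (hξ.const_mul b), integral_const_mul, hmean]

theorem integral_const_add_mul_sq (hξ : Integrable ξ P) (hξ2 : Integrable (fun ω => ξ ω ^ 2) P)
    (hmean : ∫ ω, ξ ω ∂P = 0) (hvar : ∫ ω, ξ ω ^ 2 ∂P = 1) (a b : ℝ) :
    ∫ ω, (a + b * ξ ω) ^ 2 ∂P = a ^ 2 + b ^ 2 := by
  have hexp : (fun ω => (a + b * ξ ω) ^ 2)
      = fun ω => a ^ 2 + (2 * a * b * ξ ω + b ^ 2 * ξ ω ^ 2) := by
    ext ω; ring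
  have hlin : Integrable (fun ω => 2 * a * b * ξ ω + b ^ 2 * ξ ω ^ 2) P :=
    (hξ.const_mul _).add (hξ2.const_mul _)
  rw [hexp, integral_add (integrable_const _) hlin,
    integral_add (hξ.const_mul _) (hξ2.const_mul _), integral_const_mul, integral_const_mul,
    hmean, hvar]
  simp

theorem integral_abs_const_add_mul_pow_three_le (hξ : MemLp ξ 3 P) (a b : ℝ) :
    ∫ ω, |a + b * ξ ω| ^ 3 ∂P ≤ 4 * (|a| ^ 3 + |b| ^ 3 * ∫ ω, |ξ ω| ^ 3 ∂P) := by
  have hξ3 : Integrable (fun ω => |ξ ω| ^ 3) P := by simpa using hξ.integrable_norm_pow'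
  have hX3 : Integrable (fun ω => |a + b * ξ ω| ^ 3) P := by
    simpa using ((memLp_const a).add (hξ.const_mul b)).integrable_norm_pow'
  have hpt : ∀ ω, |a + b * ξ ω| ^ 3 ≤ 4 * (|a| ^ 3 + |b| ^ 3 * |ξ ω| ^ 3) := fun ω => by
    have h₁ := abs_add_le a (b * ξ ω)
    rw [abs_mul] at h₁
    have ha := abs_nonneg a
    have hb := abs_nonneg (b * ξ ω)
    rw [abs_mul] at hb
    calc |a + b * ξ ω| ^ 3 ≤ (|a| + |b| * |ξ ω|) ^ 3 := by gcongr
      _ ≤ 4 * (|a| ^ 3 + (|b| * |ξ ω|) ^ 3) := by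
        nlinarith [mul_nonneg (add_nonneg ha hb) (sq_nonneg (|a| - |b| * |ξ ω|))]
      _ = 4 * (|a| ^ 3 + |b| ^ 3 * |ξ ω| ^ 3) := by ring
  calc ∫ ω, |a + b * ξ ω| ^ 3 ∂P ≤ ∫ ω, 4 * (|a| ^ 3 + |b| ^ 3 * |ξ ω| ^ 3) ∂P :=
        integral_mono hX3 (((integrable_const _).add (hξ3.const_mul _)).const_mul _) hpt
    _ = 4 * (|a| ^ 3 + |b| ^ 3 * ∫ ω, |ξ ω| ^ 3 ∂P) := by
        rw [integral_const_mul, integral_add (integrable_const _) (hξ3.const_mul _),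
          integral_const_mul]
        simp

theorem abs_integral_logGrowth_const_add_mul_sub_le (hf : f ∈ Icc (0 : ℝ) 1) (hξ : MemLp ξ 3 P)
    (hmean : ∫ ω, ξ ω ∂P = 0) (hvar : ∫ ω, ξ ω ^ 2 ∂P = 1) (a b : ℝ) :
    |∫ ω, logGrowth f (a + b * ξ ω) ∂P - (f * a + f * (1 - f) / 2 * (a ^ 2 + b ^ 2))|
      ≤ |a| ^ 3 + |b| ^ 3 * ∫ ω, |ξ ω| ^ 3 ∂P := by
  have hξ1 : Integrable ξ P := hξ.integrable (by norm_num)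
  have hξ2 : Integrable (fun ω => ξ ω ^ 2) P := (hξ.mono_exponent (by norm_num)).integrable_sq
  have h := abs_integral_logGrowth_sub_le hf ((memLp_const a).add (hξ.const_mul b))
  simp only [Pi.add_apply] at h
  rw [integral_const_add_mul hξ1 hmean, integral_const_add_mul_sq hξ1 hξ2 hmean hvar] at h
  linarith [integral_abs_const_add_mul_pow_three_le hξ a b]

theorem const_add_mul_not_ae_eq_zero (hξ : MemLp ξ 3 P)
    (hmean : ∫ ω, ξ ω ∂P = 0) (hvar : ∫ ω, ξ ω ^ 2 ∂P = 1) (a : ℝ) {b : ℝ} (hb : b ≠ 0) :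
    ¬ (fun ω => a + b * ξ ω) =ᵐ[P] 0 := fun h => by
  have hsq := integral_const_add_mul_sq (hξ.integrable (by norm_num))
    ((hξ.mono_exponent (by norm_num)).integrable_sq) hmean hvar a b
  have hsq0 : (fun ω => (a + b * ξ ω) ^ 2) =ᵐ[P] 0 := h.mono fun ω hω => by simp [hω]
  rw [integral_congr_ae hsq0] at hsq
  simp only [Pi.zero_apply, integral_zero] at hsq
  have : 0 < a ^ 2 + b ^ 2 := by positivity
  linarith

theorem abs_mul_integral_logGrowth_sub_gbmGrowthRate_le
    (hf : f ∈ Icc (0 : ℝ) 1) (hξ : MemLp ξ 3 P) (hmean : ∫ ω, ξ ω ∂P = 0)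
    (hvar : ∫ ω, ξ ω ^ 2 ∂P = 1) (μ σ : ℝ) {n : ℕ} (hn : 1 ≤ n) :
    |n * ∫ ω, logGrowth f ((μ - σ ^ 2 / 2) / n + σ * ξ ω / √n) ∂P - gbmGrowthRate μ σ f|
      ≤ ((μ - σ ^ 2 / 2) ^ 2 / 8 + |μ - σ ^ 2 / 2| ^ 3 + |σ| ^ 3 * ∫ ω, |ξ ω| ^ 3 ∂P) / √n := by
  set c := μ - σ ^ 2 / 2
  set M := ∫ ω, |ξ ω| ^ 3 ∂P
  set s := √(n : ℝ)
  have hs : 1 ≤ s := one_le_sqrt.2 (by exact_mod_cast hn)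
  have hs0 : 0 < s := by linarith
  have hM : 0 ≤ M := integral_nonneg fun ω => by positivity
  have h := abs_integral_logGrowth_const_add_mul_sub_le hf hξ hmean hvar (c / s ^ 2) (σ / s)
  simp_rw [show ∀ ω, c / s ^ 2 + σ / s * ξ ω = c / s ^ 2 + σ * ξ ω / s from fun ω => by ring] at h
  rw [← sq_sqrt n.cast_nonneg]
  set I := ∫ ω, logGrowth f (c / s ^ 2 + σ * ξ ω / s) ∂P
  set Q := f * (c / s ^ 2) + f * (1 - f) / 2 * ((c / s ^ 2) ^ 2 + (σ / s) ^ 2)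
  have hsplit : s ^ 2 * I - gbmGrowthRate μ σ f
      = s ^ 2 * (I - Q) + f * (1 - f) * c ^ 2 / (2 * s ^ 2) := by
    simp only [gbmGrowthRate, Q, c]
    field_simp
    ring
  have hcube : s ^ 2 * |I - Q| ≤ (|c| ^ 3 + |σ| ^ 3 * M) / s := by
    calc s ^ 2 * |I - Q| ≤ s ^ 2 * (|c / s ^ 2| ^ 3 + |σ / s| ^ 3 * M) := by gcongr
      _ = |c| ^ 3 / s ^ 4 + |σ| ^ 3 * M / s := by
        rw [abs_div, abs_div, abs_of_pos hs0, abs_of_pos (by positivity : 0 < s ^ 2)]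
        field_simp
      _ ≤ |c| ^ 3 / s + |σ| ^ 3 * M / s := by gcongr; exact le_self_pow₀ hs (by norm_num)
      _ = (|c| ^ 3 + |σ| ^ 3 * M) / s := by ring
  have hsq : |f * (1 - f) * c ^ 2 / (2 * s ^ 2)| ≤ c ^ 2 / 8 / s := by
    rw [abs_div, abs_mul, abs_of_nonneg (sq_nonneg c), abs_of_pos (by positivity : 0 < 2 * s ^ 2)]
    calc |f * (1 - f)| * c ^ 2 / (2 * s ^ 2) ≤ 1 / 4 * c ^ 2 / (2 * s) := by
          gcongr
          · exact abs_mul_one_sub_le hf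
          · nlinarith
      _ = c ^ 2 / 8 / s := by ring
  calc |s ^ 2 * I - gbmGrowthRate μ σ f|
      ≤ s ^ 2 * |I - Q| + |f * (1 - f) * c ^ 2 / (2 * s ^ 2)| := by
        rw [hsplit]
        exact (abs_add_le _ _).trans_eq (by rw [abs_mul, abs_of_nonneg (sq_nonneg s)])
    _ ≤ (c ^ 2 / 8 + |c| ^ 3 + |σ| ^ 3 * M) / s := by
        rw [add_div, add_div, add_assoc, ← add_div]
        linarith

end Affine

end Expectation

section GBM

variable {μ σ : ℝ}

theorem gbmGrowthRate_kelly (hσ : σ ≠ 0) :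
    gbmGrowthRate μ σ (μ / σ ^ 2) = μ ^ 2 / (2 * σ ^ 2) := by
  simp only [gbmGrowthRate]
  field_simp
  ring

theorem gbmGrowthRate_kelly_sub (hσ : σ ≠ 0) (f : ℝ) :
    gbmGrowthRate μ σ (μ / σ ^ 2) - gbmGrowthRate μ σ f = σ ^ 2 / 2 * (f - μ / σ ^ 2) ^ 2 := by
  simp only [gbmGrowthRate]
  field_simp
  ring

theorem isMaxOn_gbmGrowthRate (hσ : σ ≠ 0) (s : Set ℝ) :
    IsMaxOn (gbmGrowthRate μ σ) s (μ / σ ^ 2) :=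
  isMaxOn_iff.2 fun f _ => sub_nonneg.1 <| (gbmGrowthRate_kelly_sub hσ f).symm ▸ by positivity

theorem tendsto_of_tendsto_gbmGrowthRate {ι : Type*} {l : Filter ι} {x : ι → ℝ} (hσ : σ ≠ 0)
    (h : Tendsto (fun i => gbmGrowthRate μ σ (x i)) l (𝓝 (gbmGrowthRate μ σ (μ / σ ^ 2)))) :
    Tendsto x l (𝓝 (μ / σ ^ 2)) := by
  have hsq : Tendsto (fun i => (x i - μ / σ ^ 2) ^ 2) l (𝓝 0) := by
    have := ((tendsto_const_nhds (x := gbmGrowthRate μ σ (μ / σ ^ 2))).sub h).const_mul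
      (2 / σ ^ 2)
    rw [sub_self, mul_zero] at this
    refine this.congr fun i => ?_
    rw [gbmGrowthRate_kelly_sub hσ]
    field_simp
  rw [tendsto_iff_norm_sub_tendsto_zero]
  simpa [Real.sqrt_sq_eq_abs] using hsq.sqrt

end GBM

end Kelly

open Kelly

/-- convergence of the high-frequency Kelly fractions.
With `E[ξ]=0`, `E[ξ²]=1`, `E|ξ|³<∞` and `0 < μ < σ²`, the growth rate at
compounding frequency `n`,
`g_n(f) = n E[log(1 - f + f exp((μ-σ²/2)/n + σξ/√n))]`,
attains its maximum over `[0,1]` at a unique point `f_n*`, and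
`f_n* → μ/σ²`, `g_n(f_n*) → μ²/(2σ²)` as `n → ∞`. -/
theorem geometric_hf_kelly_convergence
    {Ω : Type*} [MeasurableSpace Ω] (P : Measure Ω) [IsProbabilityMeasure P]
    (ξ : Ω → ℝ) (hmeas : Measurable ξ)
    (hmean : ∫ ω, ξ ω ∂P = 0)
    (hvar : ∫ ω, (ξ ω) ^ 2 ∂P = 1)
    (hmom3 : Integrable (fun ω => |ξ ω| ^ 3) P)
    (μ σ : ℝ) (hμ : 0 < μ) (hμσ : μ < σ ^ 2) :
    ∃ fs : ℕ → ℝ,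
      (∀ n : ℕ, 1 ≤ n →
        fs n ∈ Set.Icc (0 : ℝ) 1
        ∧ (∀ f ∈ Set.Icc (0 : ℝ) 1,
            (n : ℝ) * ∫ ω, Real.log (1 - f
                + f * Real.exp ((μ - σ ^ 2 / 2) / n + σ * ξ ω / Real.sqrt n)) ∂P
              ≤ (n : ℝ) * ∫ ω, Real.log (1 - fs n
                + fs n * Real.exp ((μ - σ ^ 2 / 2) / n + σ * ξ ω / Real.sqrt n)) ∂P)
        ∧ (∀ f ∈ Set.Icc (0 : ℝ) 1,
            (∀ f' ∈ Set.Icc (0 : ℝ) 1,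
              (n : ℝ) * ∫ ω, Real.log (1 - f'
                  + f' * Real.exp ((μ - σ ^ 2 / 2) / n + σ * ξ ω / Real.sqrt n)) ∂P
                ≤ (n : ℝ) * ∫ ω, Real.log (1 - f
                  + f * Real.exp ((μ - σ ^ 2 / 2) / n + σ * ξ ω / Real.sqrt n)) ∂P)
            → f = fs n))
      ∧ Tendsto fs atTop (𝓝 (μ / σ ^ 2))
      ∧ Tendsto (fun n : ℕ =>
          (n : ℝ) * ∫ ω, Real.log (1 - fs n
            + fs n * Real.exp ((μ - σ ^ 2 / 2) / n + σ * ξ ω / Real.sqrt n)) ∂P)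
          atTop (𝓝 (μ ^ 2 / (2 * σ ^ 2))) := by
  have hσ : σ ≠ 0 := by rintro rfl; linarith
  have hξ : MemLp ξ 3 P := memLp_three_of_integrable_abs_pow hmeas.aestronglyMeasurable hmom3
  set X : ℕ → Ω → ℝ := fun n ω => (μ - σ ^ 2 / 2) / n + σ * ξ ω / √n
  have hX : ∀ n, Integrable (X n) P := fun n =>
    (integrable_const _).add (((hξ.integrable (by norm_num)).const_mul σ).div_const _)
  choose fs hfs hmax using fun n => isCompact_Icc.exists_isMaxOn (nonempty_Icc.2 zero_le_one)
    (continuousOn_integral_logGrowth (hX n))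
  have hGmax : ∀ n : ℕ, IsMaxOn (fun f => n * ∫ ω, logGrowth f (X n ω) ∂P) (Icc 0 1) (fs n) :=
    fun n => (hmax n).comp_mono (monotone_mul_left_of_nonneg n.cast_nonneg)
  have hkelly : μ / σ ^ 2 ∈ Icc (0 : ℝ) 1 := ⟨by positivity, (div_le_one (by positivity)).2 hμσ.le⟩
  obtain ⟨hgrowth, hgbm⟩ := tendsto_of_isMaxOn_of_abs_sub_le
    (tendsto_const_nhds.div_atTop (tendsto_sqrt_atTop.comp tendsto_natCast_atTop_atTop))
    hkelly (isMaxOn_gbmGrowthRate hσ _) hfs hGmax (eventually_atTop.2 ⟨1, fun n hn f hf =>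
      abs_mul_integral_logGrowth_sub_gbmGrowthRate_le hf hξ hmean hvar μ σ hn⟩)
  refine ⟨fs, fun n hn => ⟨hfs n, isMaxOn_iff.1 (hGmax n), fun f hf hfmax => ?_⟩,
    tendsto_of_tendsto_gbmGrowthRate hσ hgbm, gbmGrowthRate_kelly hσ ▸ hgrowth⟩
  have hn' : (0 : ℝ) < n := Nat.cast_pos.2 hn
  have hX0 : ¬ X n =ᵐ[P] 0 := by
    have hXn : X n = fun ω => (μ - σ ^ 2 / 2) / n + σ / √n * ξ ω := by ext; simp only [X]; ring
    rw [hXn]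
    exact const_add_mul_not_ae_eq_zero hξ hmean hvar _ (div_ne_zero hσ (sqrt_pos.2 hn').ne')
  exact (strictConcaveOn_integral_logGrowth (hX n) hX0).eq_of_isMaxOn
    (isMaxOn_iff.2 fun f' hf' => le_of_mul_le_mul_left (hfmax f' hf') hn') (hmax n) hf (hfs n)
end
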